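/- arXiv:0708.1263 — 9 statements merged into one kernel-verified Lean document; each statement's English description precedes it below -/
import Mathlib

section
/- Let Ω be a compact metric space that is not finite, let T : Ω → Ω be a minimal homeomorphism, and suppose that (Ω,T) satisfies the topological repetition property (TRP), i.e., there exists a point of Ω whose forward T-orbit has the repetition property. Then there exists a residual (comeager) subset F of the space C(Ω,ℝ) of real-valued continuous functions on Ω with the uniform metric such that for every f ∈ F there is a residual subset Ω_f ⊆ Ω with the property that for every ω ∈ Ω_f, the potential V_ω : ℤ → ℝ defined by V_ω(n) = f(T^n ω) is a Gordon potential. -/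
open Filter Topology MeasureTheory

/-- A sequence in a metric space has the repetition property if for every `ε > 0` and
`r > 0` there is a positive integer `q` such that `dist (u k) (u (k+q)) < ε` for all
`k = 0, 1, …, ⌊r * q⌋`. -/
def RepetitionProperty {Ω : Type*} [PseudoMetricSpace Ω] (u : ℕ → Ω) : Prop :=
  ∀ ε > (0 : ℝ), ∀ r > (0 : ℝ), ∃ q : ℕ, 0 < q ∧
    ∀ k : ℕ, k ≤ ⌊r * q⌋₊ → dist (u k) (u (k + q)) < ε

/-- `PRP T` is the set of points whose forward orbit under `T` has the repetition
property. -/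
def PRP {Ω : Type*} [PseudoMetricSpace Ω] (T : Ω → Ω) : Set Ω :=
  { ω | RepetitionProperty fun k => T^[k] ω }

/-- A bounded function `V : ℤ → ℝ` is a Gordon potential if there are positive integers
`q k → ∞` with `|V n - V (n ± q k)| ≤ k ^ (-(q k))` for all `1 ≤ n ≤ q k` and `k ≥ 1`. -/
def IsGordonPotential (V : ℤ → ℝ) : Prop :=
  (∃ M : ℝ, ∀ n : ℤ, |V n| ≤ M) ∧
  ∃ q : ℕ → ℕ, (∀ k, 0 < q k) ∧ Tendsto q atTop atTop ∧
    ∀ k : ℕ, 1 ≤ k → ∀ n : ℤ, 1 ≤ n → n ≤ (q k : ℤ) →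
      |V n - V (n + q k)| ≤ ((k : ℝ) ^ q k)⁻¹ ∧
      |V n - V (n - q k)| ≤ ((k : ℝ) ^ q k)⁻¹


/-!
Fix `k` and a basic open set `V`. The functions `f` having a point of `V` at which the `k`-th
Gordon estimate holds for some period `q ≥ k` form an open set of `C(Ω, ℝ)`. It is dense: the
orbit `x i = Tⁱ ω₀` of a (TRP) point has no repetitions (`Ω` is infinite and `T` minimal), visits
`V` with bounded gaps `≤ L` (minimality and compactness), and for a repetition time `q` of scale
`L + 2` it nearly repeats itself along a window of length `3q` whose middle point `x (j + q - 1)`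
lies in `V`. By Tietze, a uniformly small change of `f` makes it exactly `q`-periodic along that
window. Intersecting over `k` and `V` and applying Baire in `C(Ω, ℝ)` gives the residual set of
`f`; for such an `f` the good points for `k` are open and dense, and Baire in `Ω` gives `Ω_f`.
-/

theorem Homeomorph.coe_toEquiv_zpow {X : Type*} [TopologicalSpace X] (T : X ≃ₜ X) (n : ℤ) :
    ⇑(T.toEquiv ^ n) = ⇑(T ^ n) :=
  congrArg DFunLike.coe
    (map_zpow (⟨⟨Homeomorph.toEquiv, rfl⟩, fun _ _ => rfl⟩ : (X ≃ₜ X) →* Equiv.Perm X) T n).symm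

theorem Homeomorph.continuous_toEquiv_zpow {X : Type*} [TopologicalSpace X] (T : X ≃ₜ X)
    (n : ℤ) : Continuous (T.toEquiv ^ n) := by
  rw [T.coe_toEquiv_zpow]
  exact (T ^ n).continuous

theorem Homeomorph.iterate_eq_toEquiv_zpow {X : Type*} [TopologicalSpace X] (T : X ≃ₜ X)
    (k : ℕ) : (⇑T)^[k] = ⇑(T.toEquiv ^ (k : ℤ)) := by
  rw [zpow_natCast, ← Equiv.Perm.iterate_eq_pow, Homeomorph.coe_toEquiv]

theorem Equiv.Perm.zpow_apply_zpow_apply {α : Type*} (e : Equiv.Perm α) (m n : ℤ) (x : α) :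
    (e ^ m) ((e ^ n) x) = (e ^ (m + n)) x := by
  rw [zpow_add, Equiv.Perm.mul_apply]

/-- A periodic point would have a finite, hence closed, dense orbit. -/
theorem Equiv.Perm.injective_zpow_apply_of_dense {X : Type*} [TopologicalSpace X] [T1Space X]
    [Infinite X] {e : Equiv.Perm X} (hmin : ∀ x : X, Dense (Set.range fun n : ℤ => (e ^ n) x))
    (x : X) : Function.Injective fun n : ℤ => (e ^ n) x := by
  intro a b hab
  by_contra hne
  set y := (e ^ b) x
  have hp : a - b ≠ 0 := sub_ne_zero.2 hne
  have hfix : (e ^ (a - b)) y = y := by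
    rw [Equiv.Perm.zpow_apply_zpow_apply, sub_add_cancel]
    exact hab
  have hrange : (Set.range fun n : ℤ => (e ^ n) y) ⊆
      (fun n : ℤ => (e ^ n) y) '' Set.Ico 0 (a - b).natAbs := by
    rintro _ ⟨n, rfl⟩
    refine ⟨n % (a - b), ⟨Int.emod_nonneg n hp, Int.emod_lt n hp⟩, ?_⟩
    show (e ^ (n % (a - b))) y = (e ^ n) y
    conv_rhs => rw [← Int.emod_add_mul_ediv n (a - b)]
    rw [zpow_add, zpow_mul, Equiv.Perm.mul_apply,
      Equiv.Perm.zpow_apply_eq_self_of_apply_eq_self hfix]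
  have hfin := ((Set.finite_Ico _ _).image _).subset hrange
  have huniv := hfin.isClosed.closure_eq ▸ (hmin y).closure_eq
  have : Finite X := Set.finite_univ_iff.1 (huniv ▸ hfin)
  exact not_finite X

/-- Finitely many translates `T⁻ⁿ V`, `|n| ≤ a`, cover `X`; start the orbit `a` steps later. -/
theorem exists_forall_exists_le_zpow_apply_mem {X : Type*} [TopologicalSpace X]
    [CompactSpace X] (T : X ≃ₜ X)
    (hmin : ∀ x : X, Dense (Set.range fun n : ℤ => (T.toEquiv ^ n) x))
    {V : Set X} (hV : IsOpen V) (hne : V.Nonempty) :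
    ∃ L : ℕ, ∀ x : X, ∃ j : ℕ, j ≤ L ∧ (T.toEquiv ^ (j : ℤ)) x ∈ V := by
  have hcover : Set.univ ⊆ ⋃ n : ℤ, (T.toEquiv ^ n) ⁻¹' V := fun x _ => by
    obtain ⟨_, hyV, n, rfl⟩ := (hmin x).inter_open_nonempty V hV hne
    exact Set.mem_iUnion.2 ⟨n, hyV⟩
  obtain ⟨s, hs⟩ := isCompact_univ.elim_finite_subcover _
    (fun n => hV.preimage (T.continuous_toEquiv_zpow n)) hcover
  set a := s.sup Int.natAbs
  refine ⟨2 * a, fun x => ?_⟩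
  obtain ⟨i, hi, hiV⟩ := Set.mem_iUnion₂.1 (hs (Set.mem_univ ((T.toEquiv ^ (a : ℤ)) x)))
  have hia : i.natAbs ≤ a := Finset.le_sup hi
  refine ⟨(i + a).toNat, by omega, ?_⟩
  rwa [Int.toNat_of_nonneg (by omega), ← Equiv.Perm.zpow_apply_zpow_apply]

theorem RepetitionProperty.exists_period_ge {X : Type*} [MetricSpace X] {u : ℕ → X}
    (hu : RepetitionProperty u) (hinj : Function.Injective u) {ε : ℝ} (hε : 0 < ε)
    {r : ℝ} (hr : 0 < r) (N : ℕ) :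
    ∃ q : ℕ, N ≤ q ∧ 0 < q ∧ ∀ k : ℕ, k ≤ ⌊r * q⌋₊ → dist (u k) (u (k + q)) < ε := by
  have hsmall : ∀ᶠ ε' in 𝓝[>] (0 : ℝ), ε' < ε ∧ ∀ p ∈ Finset.Ioo 0 N, ε' < dist (u 0) (u p) := by
    refine nhdsWithin_le_nhds ((eventually_lt_nhds hε).and ((Finset.eventually_all _).2 ?_))
    intro p hp
    exact eventually_lt_nhds (dist_pos.2 (hinj.ne (Finset.mem_Ioo.1 hp).1.ne))
  obtain ⟨ε', ⟨hε'ε, hε'N⟩, hε'⟩ := (hsmall.and self_mem_nhdsWithin).exists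
  obtain ⟨q, hq, hrep⟩ := hu ε' hε' r hr
  refine ⟨q, ?_, hq, fun k hk => (hrep k hk).trans hε'ε⟩
  by_contra! hqN
  have h0 := hrep 0 (Nat.zero_le _)
  rw [zero_add] at h0
  exact (hε'N q (Finset.mem_Ioo.2 ⟨hq, hqN⟩)).not_gt h0

theorem dist_le_mul_of_forall_dist_add_lt {X : Type*} [PseudoMetricSpace X] {u : ℕ → X}
    {q n : ℕ} {ε : ℝ} (h : ∀ i, i + q < n → dist (u i) (u (i + q)) < ε) (t : ℕ) {j : ℕ}
    (hj : j + t * q < n) : dist (u j) (u (j + t * q)) ≤ t * ε := by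
  induction t with
  | zero => simp
  | succ t ih =>
    rw [Nat.succ_mul, ← add_assoc] at hj ⊢
    calc dist (u j) (u (j + t * q + q))
        ≤ dist (u j) (u (j + t * q)) + dist (u (j + t * q)) (u (j + t * q + q)) :=
          dist_triangle _ _ _
      _ ≤ t * ε + ε := add_le_add (ih (by omega)) (h _ hj).le
      _ = (t + 1 : ℕ) * ε := by push_cast; ring

theorem ContinuousMap.exists_dist_le_eqOn {X : Type*} [TopologicalSpace X] [CompactSpace X]
    [T2Space X] (f : C(X, ℝ)) {s : Set X} (hs : s.Finite) (c : X → ℝ) {η : ℝ} (hη : 0 ≤ η)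
    (hc : ∀ y ∈ s, |c y - f y| ≤ η) : ∃ g : C(X, ℝ), dist g f ≤ η ∧ Set.EqOn g c s := by
  have : Finite s := hs.to_subtype
  let h : C(s, ℝ) := ⟨fun y => c y - f y, continuous_of_discreteTopology⟩
  obtain ⟨h', hh'η, hh'⟩ := h.exists_restrict_eq_forall_mem_of_closed (t := Set.Icc (-η) η)
    (fun y => abs_le.1 (hc y y.2)) ⟨0, by simpa using hη⟩ hs.isClosed
  refine ⟨f + h', (ContinuousMap.dist_le hη).2 fun y => ?_, fun y hy => ?_⟩
  · simpa [Real.dist_eq, abs_le] using hh'η y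
  · have := congrArg (· ⟨y, hy⟩) hh'
    simp only [ContinuousMap.restrict_apply] at this
    simp [h, this]

/-- On the window `u 0, …, u (3q - 1)` prescribe the values of `f` at `u 0, …, u (q - 1)`,
repeated `q`-periodically; each `u i` is within two steps of length `< ε` of `u (i % q)`. -/
theorem ContinuousMap.exists_dist_le_forall_apply_add_eq {X : Type*} [MetricSpace X]
    [CompactSpace X] (f : C(X, ℝ)) {u : ℕ → X} (hu : Function.Injective u) {q : ℕ} (hq : 0 < q)
    {ε η : ℝ} (hf : ∀ a b, dist a b ≤ 2 * ε → |f a - f b| ≤ η)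
    (hstep : ∀ i < 2 * q, dist (u i) (u (i + q)) < ε) :
    ∃ g : C(X, ℝ), dist g f ≤ η ∧ ∀ i < 2 * q, g (u (i + q)) = g (u i) := by
  have hε : 0 ≤ ε := dist_nonneg.trans (hstep 0 (by omega)).le
  have hη : 0 ≤ η := (abs_nonneg _).trans (hf (u 0) (u 0) (by simpa using hε))
  have hchain : ∀ i < 3 * q, dist (u (i % q)) (u i) ≤ 2 * ε := by
    intro i hi
    have hdiv : i / q ≤ 2 := by
      have := (Nat.div_lt_iff_lt_mul hq).2 (by omega : i < 3 * q)
      omega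
    have := dist_le_mul_of_forall_dist_add_lt (n := 3 * q) (fun i hi => hstep i (by omega))
      (i / q) (j := i % q) (by rwa [Nat.mod_add_div'])
    rw [Nat.mod_add_div'] at this
    exact this.trans (mul_le_mul_of_nonneg_right (by exact_mod_cast hdiv) hε)
  obtain ⟨g, hgf, hg⟩ := f.exists_dist_le_eqOn ((Set.finite_Iio (3 * q)).image u)
    (fun y => f (u (Function.invFun u y % q))) hη (by
      rintro _ ⟨i, hi, rfl⟩
      simpa only [Function.leftInverse_invFun hu i] using hf _ _ (hchain i hi))
  refine ⟨g, hgf, fun i hi => ?_⟩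
  rw [hg (Set.mem_image_of_mem u (by simp only [Set.mem_Iio]; omega)),
    hg (Set.mem_image_of_mem u (by simp only [Set.mem_Iio]; omega))]
  simp only [Function.leftInverse_invFun hu _, Nat.add_mod_right]

section Gordon

variable {Ω : Type*} [MetricSpace Ω] (T : Ω ≃ₜ Ω)

/-- The `k`-th Gordon condition at `ω`, with `ε` in place of `(k ^ q)⁻¹`. -/
def AlmostPeriodicAt (f : C(Ω, ℝ)) (q : ℕ) (ε : ℝ) (ω : Ω) : Prop :=
  ∀ n ∈ Set.Icc (1 : ℤ) q,
    |f ((T.toEquiv ^ n) ω) - f ((T.toEquiv ^ (n + q)) ω)| < ε ∧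
    |f ((T.toEquiv ^ n) ω) - f ((T.toEquiv ^ (n - q)) ω)| < ε

theorem isOpen_setOf_almostPeriodicAt [CompactSpace Ω] (q : ℕ) (ε : ℝ) :
    IsOpen {p : C(Ω, ℝ) × Ω | AlmostPeriodicAt T p.1 q ε p.2} := by
  have hc : ∀ m : ℤ, Continuous fun p : C(Ω, ℝ) × Ω => p.1 ((T.toEquiv ^ m) p.2) := fun m => by
    have := T.continuous_toEquiv_zpow m
    fun_prop
  have : {p : C(Ω, ℝ) × Ω | AlmostPeriodicAt T p.1 q ε p.2} = ⋂ n ∈ Set.Icc (1 : ℤ) q,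
      {p | |p.1 ((T.toEquiv ^ n) p.2) - p.1 ((T.toEquiv ^ (n + q)) p.2)| < ε} ∩
      {p | |p.1 ((T.toEquiv ^ n) p.2) - p.1 ((T.toEquiv ^ (n - q)) p.2)| < ε} := by
    ext p
    simp [AlmostPeriodicAt]
  rw [this]
  exact (Set.finite_Icc _ _).isOpen_biInter fun n _ =>
    (isOpen_lt ((hc _).sub (hc _)).abs continuous_const).inter
      (isOpen_lt ((hc _).sub (hc _)).abs continuous_const)

theorem almostPeriodicAt_zpow_of_forall_apply_add_eq {g : C(Ω, ℝ)} {q : ℕ} {ε : ℝ}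
    (hε : 0 < ε) {z : Ω}
    (hg : ∀ i < 2 * q, g ((T.toEquiv ^ ((i + q : ℕ) : ℤ)) z) = g ((T.toEquiv ^ (i : ℤ)) z)) :
    AlmostPeriodicAt T g q ε ((T.toEquiv ^ ((q - 1 : ℕ) : ℤ)) z) := by
  have hg' : ∀ m : ℤ, 0 ≤ m → m < 2 * q →
      g ((T.toEquiv ^ (m + q)) z) = g ((T.toEquiv ^ m) z) := by
    intro m hm hmq
    lift m to ℕ using hm
    exact_mod_cast hg m (by omega)
  rintro n ⟨hn1, hnq⟩
  simp only [Equiv.Perm.zpow_apply_zpow_apply]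
  have h1 := hg' (n + ((q - 1 : ℕ) : ℤ)) (by omega) (by omega)
  have h2 := hg' (n - q + ((q - 1 : ℕ) : ℤ)) (by omega) (by omega)
  rw [add_right_comm] at h1
  rw [show n - q + ((q - 1 : ℕ) : ℤ) + q = n + ((q - 1 : ℕ) : ℤ) by ring] at h2
  rw [h1, h2, sub_self, abs_zero]
  exact ⟨hε, hε⟩

def gordonSet (k : ℕ) : Set (C(Ω, ℝ) × Ω) :=
  {p | ∃ q ≥ k, AlmostPeriodicAt T p.1 q ((k : ℝ) ^ q)⁻¹ p.2}

theorem isOpen_gordonSet [CompactSpace Ω] (k : ℕ) : IsOpen (gordonSet T k) := by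
  rw [isOpen_iff_mem_nhds]
  rintro p ⟨q, hkq, hp⟩
  exact mem_of_superset ((isOpen_setOf_almostPeriodicAt T q _).mem_nhds hp)
    fun p' hp' => ⟨q, hkq, hp'⟩

theorem isOpen_setOf_exists_mem_gordonSet [CompactSpace Ω] (k : ℕ) (V : Set Ω) :
    IsOpen {f : C(Ω, ℝ) | ∃ ω ∈ V, (f, ω) ∈ gordonSet T k} := by
  rw [isOpen_iff_mem_nhds]
  rintro f ⟨ω, hωV, hfω⟩
  have hslice := (isOpen_gordonSet T k).preimage (Continuous.prodMk_left ω)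
  exact mem_of_superset (hslice.mem_nhds hfω) fun f' hf' => ⟨ω, hωV, hf'⟩

theorem dense_setOf_exists_mem_gordonSet [CompactSpace Ω] [Infinite Ω]
    (hmin : ∀ ω : Ω, Dense (Set.range fun n : ℤ => (T.toEquiv ^ n) ω))
    {ω₀ : Ω} (hω₀ : ω₀ ∈ PRP (⇑T)) {k : ℕ} (hk : 0 < k) {V : Set Ω} (hV : IsOpen V)
    (hne : V.Nonempty) : Dense {f : C(Ω, ℝ) | ∃ ω ∈ V, (f, ω) ∈ gordonSet T k} := by
  set e := T.toEquiv
  refine Metric.dense_iff.2 fun f δ hδ => ?_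
  obtain ⟨ε, hε, hfε⟩ := Metric.uniformContinuous_iff.1
    (CompactSpace.uniformContinuous_of_continuous f.continuous) (δ / 2) (half_pos hδ)
  obtain ⟨L, hL⟩ := exists_forall_exists_le_zpow_apply_mem T hmin hV hne
  have hinj := Equiv.Perm.injective_zpow_apply_of_dense hmin
  have hrep : RepetitionProperty fun i : ℕ => (e ^ (i : ℤ)) ω₀ := by
    simpa only [PRP, Set.mem_ofPred_eq, T.iterate_eq_toEquiv_zpow] using hω₀
  obtain ⟨q, hkq, hq, hq_rep⟩ := hrep.exists_period_ge ((hinj ω₀).comp Nat.cast_injective)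
    (div_pos hε three_pos) (r := L + 2) (by positivity) k
  obtain ⟨j, hjL, hjV⟩ := hL ((e ^ ((q - 1 : ℕ) : ℤ)) ω₀)
  set z := (e ^ (j : ℤ)) ω₀
  have horbit : ∀ i : ℕ, (e ^ (i : ℤ)) z = (e ^ ((j + i : ℕ) : ℤ)) ω₀ := fun i => by
    rw [Equiv.Perm.zpow_apply_zpow_apply]
    push_cast
    ring_nf
  have hstep : ∀ i < 2 * q, dist ((e ^ (i : ℤ)) z) ((e ^ ((i + q : ℕ) : ℤ)) z) < ε / 3 := by
    intro i hi
    rw [horbit, horbit, ← add_assoc]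
    refine hq_rep _ (Nat.le_floor ?_)
    have : L ≤ L * q := Nat.le_mul_of_pos_right L hq
    have : j + i ≤ (L + 2) * q := by linarith
    exact_mod_cast this
  obtain ⟨g, hgf, hg⟩ := f.exists_dist_le_forall_apply_add_eq ((hinj z).comp Nat.cast_injective)
    hq (ε := ε / 3) (η := δ / 2)
    (fun a b hab => by simpa [Real.dist_eq] using (hfε (by linarith : dist a b < ε)).le) hstep
  have hk_pos : (0 : ℝ) < ((k : ℝ) ^ q)⁻¹ := inv_pos.2 (pow_pos (by exact_mod_cast hk) q)
  refine ⟨g, Metric.mem_ball.2 (by linarith), (e ^ ((q - 1 : ℕ) : ℤ)) z, ?_, q, hkq,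
    almostPeriodicAt_zpow_of_forall_apply_add_eq T hk_pos hg⟩
  rwa [Equiv.Perm.zpow_apply_comm]

theorem isGordonPotential_of_forall_mem_gordonSet [CompactSpace Ω] {f : C(Ω, ℝ)} {ω : Ω}
    (h : ∀ k : ℕ, (f, ω) ∈ gordonSet T (k + 1)) :
    IsGordonPotential fun n : ℤ => f ((T.toEquiv ^ n) ω) := by
  choose q hkq hq using h
  refine ⟨⟨‖f‖, fun n => f.norm_coe_le_norm _⟩, fun k => q (k - 1), fun k => by grind,
    tendsto_atTop_mono (fun k => by grind) tendsto_id, ?_⟩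
  rintro k hk n hn1 hnq
  obtain ⟨k, rfl⟩ := Nat.exists_eq_add_of_le' hk
  have := hq k n ⟨hn1, hnq⟩
  simp only [Nat.add_sub_cancel] at this ⊢
  exact ⟨this.1.le, this.2.le⟩

end Gordon

/-- **Theorem 1 (topological version).** If the minimal homeomorphism `T` of the infinite
compact metric space `Ω` satisfies (TRP), then for a residual set of `f ∈ C(Ω, ℝ)` there
is a residual set of `ω ∈ Ω` such that `n ↦ f (Tⁿ ω)` is a Gordon potential. -/
theorem generic_gordon_of_TRP {Ω : Type*} [MetricSpace Ω] [CompactSpace Ω] [Infinite Ω]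
    (T : Ω ≃ₜ Ω)
    (hmin : ∀ ω : Ω, Dense (Set.range fun n : ℤ => (T.toEquiv ^ n) ω))
    (hTRP : (PRP (⇑T)).Nonempty) :
    ∃ F ∈ residual C(Ω, ℝ), ∀ f ∈ F, ∃ Ωf ∈ residual Ω, ∀ ω ∈ Ωf,
      IsGordonPotential fun n : ℤ => f ((T.toEquiv ^ n) ω) := by
  obtain ⟨ω₀, hω₀⟩ := hTRP
  obtain ⟨B, hBc, hBempty, hB⟩ := TopologicalSpace.exists_countable_basis Ω
  have hBne : ∀ V ∈ B, V.Nonempty := fun V hV =>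
    Set.nonempty_iff_ne_empty.2 fun h => hBempty (h ▸ hV)
  set F := ⋂ k : ℕ, ⋂ V ∈ B, {f : C(Ω, ℝ) | ∃ ω ∈ V, (f, ω) ∈ gordonSet T (k + 1)}
  have hF : F ∈ residual C(Ω, ℝ) :=
    countable_iInter_mem.2 fun k => (countable_bInter_mem hBc).2 fun V hV =>
      residual_of_dense_open (isOpen_setOf_exists_mem_gordonSet T _ V)
        (dense_setOf_exists_mem_gordonSet T hmin hω₀ k.succ_pos (hB.isOpen hV) (hBne V hV))
  refine ⟨F, hF, fun f hf => ⟨⋂ k : ℕ, {ω | (f, ω) ∈ gordonSet T (k + 1)}, ?_,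
    fun ω hω => isGordonPotential_of_forall_mem_gordonSet T fun k => Set.mem_iInter.1 hω k⟩⟩
  refine countable_iInter_mem.2 fun k => residual_of_dense_open
    ((isOpen_gordonSet T _).preimage (Continuous.prodMk_right f)) (hB.dense_iff.2 fun V hV _ => ?_)
  obtain ⟨ω, hωV, hω⟩ := Set.mem_iInter₂.1 (Set.mem_iInter.1 hf k) V hV
  exact ⟨ω, hωV, hω⟩
end

section
/- Let Ω be a compact metric space that is not finite, let T : Ω → Ω be a minimal homeomorphism, let μ be a T-ergodic Borel probability measure on Ω, and suppose (Ω,T,μ) satisfies the metric repetition property (MRP), i.e., μ(PRP(Ω,T)) > 0. Then there exists a residual subset F of C(Ω,ℝ) (with the uniform metric) such that for every f ∈ F there is a Borel subset Ω_f ⊆ Ω with μ(Ω_f) = 1 such that for every ω ∈ Ω_f, the potential V_ω : ℤ → ℝ defined by V_ω(n) = f(T^n ω) is a Gordon potential. -/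
open Filter Topology MeasureTheory

/-!
Let `U k` (`gordonApprox`) be the set of `f` that are `c`-close to some `g` which, along the
orbits of a set of points of measure `≥ 1 - 2⁻ᵏ`, is exactly `q`-periodic on a window
`[1 - q, 2 q]` for some `q > k` with `2 c ≤ (k + 1)⁻ᵠ`. Each `U k` is open, and for
`f ∈ ⋂ U k` the potentials are Gordon on the `liminf` of these sets, which has full measure
by Borel–Cantelli.

For the density of `U k`: by ergodicity almost every point has the repetition property, so
most of the space is covered by the sets `repetitionSet T m δ q`, `k < q ≤ Q`, of points whose
orbit is `δ`-close to `q`-periodic during `m` periods. Minimality makes `μ` non-atomic with full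
support, so there are marker sets of small positive measure, and a Kakutani–Rokhlin construction
over such a marker cuts almost all orbits into disjoint towers of heights `m q` with bases in
these sets. On (closed inner approximations of) the level `l` of a tower over `b`, replace
`f (Tˡ b)` by `f (T^(l mod q) b)`: this is uniformly close to `f`, exactly `q`-periodic up the
tower, and extends to a continuous function by Tietze. The levels near the ends of the towers,
which carry no full window, fill at most `3 / m` of the space.
-/

open scoped ENNReal

namespace GordonMRP

section RepetitionProperty

variable {α β : Type*} [PseudoMetricSpace α] [PseudoMetricSpace β]

theorem RepetitionProperty.comp {u : ℕ → α} (hu : RepetitionProperty u) {S : α → β}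
    (hS : UniformContinuous S) : RepetitionProperty (S ∘ u) := by
  intro ε hε r hr
  obtain ⟨δ, hδ, hSδ⟩ := Metric.uniformContinuous_iff.mp hS ε hε
  obtain ⟨q, hq, hclose⟩ := hu δ hδ r hr
  exact ⟨q, hq, fun k hk => hSδ (hclose k hk)⟩

theorem dist_le_mul_of_forall_dist_le {u : ℕ → α} {q J : ℕ} {δ : ℝ}
    (h : ∀ j, j + q ≤ J → dist (u j) (u (j + q)) ≤ δ) (s : ℕ) :
    ∀ i : ℕ, s + i * q ≤ J → dist (u s) (u (s + i * q)) ≤ i * δ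
  | 0, _ => by simp
  | i + 1, hi => by
    have hstep := h (s + i * q) (by linarith)
    calc dist (u s) (u (s + (i + 1) * q))
        ≤ dist (u s) (u (s + i * q)) + dist (u (s + i * q)) (u (s + i * q + q)) := by
          rw [show s + (i + 1) * q = s + i * q + q by ring]; exact dist_triangle _ _ _
      _ ≤ i * δ + δ := add_le_add (dist_le_mul_of_forall_dist_le h s i (by linarith)) hstep
      _ = (i + 1 : ℕ) * δ := by push_cast; ring

theorem dist_mod_le_of_forall_dist_le {u : ℕ → α} {q M : ℕ} {δ : ℝ}
    (h : ∀ j ≤ M * q, dist (u j) (u (j + q)) ≤ δ) {l : ℕ} (hl : l < M * q) :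
    dist (u (l % q)) (u l) ≤ M * δ := by
  have hq : 0 < q := Nat.pos_of_ne_zero fun hq => by simp [hq] at hl
  have hδ : 0 ≤ δ := dist_nonneg.trans (h 0 zero_le)
  have hchain := dist_le_mul_of_forall_dist_le (J := M * q) (fun j hj => h j (by omega))
    (l % q) (l / q) (by rw [Nat.mod_add_div']; exact hl.le)
  rw [Nat.mod_add_div'] at hchain
  refine hchain.trans (mul_le_mul_of_nonneg_right ?_ hδ)
  exact_mod_cast (Nat.div_lt_iff_lt_mul hq).mpr hl |>.le

/-- Chaining `k + 1` repetitions of a short period `q₀` gives a period larger than `k`. -/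
theorem RepetitionProperty.exists_gt {u : ℕ → α} (hu : RepetitionProperty u) {δ : ℝ}
    (hδ : 0 < δ) (R k : ℕ) :
    ∃ q, k < q ∧ ∀ j, j ≤ R * q → dist (u j) (u (j + q)) ≤ δ := by
  obtain ⟨q₀, hq₀, hclose⟩ := hu (δ / (k + 1)) (by positivity) ((R + 1) * (k + 1)) (by positivity)
  have hfloor : ⌊((R + 1) * (k + 1) : ℝ) * q₀⌋₊ = (R + 1) * (k + 1) * q₀ := by
    exact_mod_cast Nat.floor_natCast ((R + 1) * (k + 1) * q₀)
  refine ⟨(k + 1) * q₀, by nlinarith, fun j hj => ?_⟩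
  have hstep : ∀ i, i + q₀ ≤ (R + 1) * (k + 1) * q₀ + q₀ →
      dist (u i) (u (i + q₀)) ≤ δ / (k + 1) := fun i hi =>
    (hclose i (by rw [hfloor]; omega)).le
  have := dist_le_mul_of_forall_dist_le hstep j (k + 1) (by nlinarith)
  rwa [show ((k + 1 : ℕ) : ℝ) * (δ / (k + 1)) = δ by push_cast; field_simp] at this

theorem repetitionProperty_iff {u : ℕ → α} :
    RepetitionProperty u ↔ ∀ N : ℕ, ∃ q : ℕ, 0 < q ∧
      ∀ k ≤ ⌊((N : ℝ) + 1) * q⌋₊, dist (u k) (u (k + q)) < ((N : ℝ) + 1)⁻¹ := by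
  refine ⟨fun h N => h _ (by positivity) _ (by positivity), fun h ε hε r hr => ?_⟩
  obtain ⟨N, hN⟩ := exists_nat_gt (max r ε⁻¹)
  obtain ⟨q, hq, hclose⟩ := h N
  refine ⟨q, hq, fun k hk => (hclose k ?_).trans ?_⟩
  · exact hk.trans (Nat.floor_le_floor (by gcongr; linarith [le_max_left r ε⁻¹]))
  · rw [inv_lt_comm₀ (by positivity) hε]; linarith [le_max_right r ε⁻¹]

theorem measurableSet_PRP [MeasurableSpace α] [OpensMeasurableSpace α] {T : α → α}
    (hT : Continuous T) : MeasurableSet (PRP T) := by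
  have hPRP : PRP T = ⋂ N : ℕ, ⋃ q : ℕ, ⋃ (_ : 0 < q),
      ⋂ k ∈ Finset.range (⌊((N : ℝ) + 1) * q⌋₊ + 1),
        {ω | dist (T^[k] ω) (T^[k + q] ω) < ((N : ℝ) + 1)⁻¹} := by
    ext ω
    simp only [PRP, Set.mem_ofPred_eq, repetitionProperty_iff, Set.mem_iInter, Set.mem_iUnion,
      Finset.mem_range, Nat.lt_succ_iff, exists_prop]
  rw [hPRP]
  refine .iInter fun N => .iUnion fun q => .iUnion fun _ => IsOpen.measurableSet ?_
  exact isOpen_biInter_finset fun k _ =>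
    isOpen_lt ((hT.iterate k).dist (hT.iterate (k + q))) continuous_const

end RepetitionProperty

section RepetitionSet

variable {Ω : Type*} [PseudoMetricSpace Ω] {T : Ω → Ω}

variable (T) in
def repetitionSet (R : ℕ) (δ : ℝ) (q : ℕ) : Set Ω :=
  {x | ∀ j ≤ R * q, dist (T^[j] x) (T^[j + q] x) ≤ δ}

theorem isClosed_repetitionSet (hT : Continuous T) (R : ℕ) (δ : ℝ) (q : ℕ) :
    IsClosed (repetitionSet T R δ q) := by
  simp only [repetitionSet, Set.ofPred_forall]
  exact isClosed_iInter fun j => isClosed_iInter fun _ =>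
    isClosed_le ((hT.iterate j).dist (hT.iterate (j + q))) continuous_const

theorem dist_apply_iterate_mod_lt {f : Ω → ℝ} {δ₀ ε : ℝ} (hδ₀ : 0 < δ₀)
    (hf : ∀ x y, dist x y < δ₀ → dist (f x) (f y) < ε) {m q l : ℕ} (hl : l < m * q) {b : Ω}
    (hb : b ∈ repetitionSet T m (δ₀ / (m + 1)) q) :
    dist (f (T^[l % q] b)) (f (T^[l] b)) < ε := by
  refine hf _ _ ((dist_mod_le_of_forall_dist_le (u := fun j => T^[j] b) hb hl).trans_lt ?_)
  rw [mul_div_assoc', div_lt_iff₀ (by positivity)]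
  nlinarith

theorem exists_measure_compl_repetitionSet_le [MeasurableSpace Ω] [OpensMeasurableSpace Ω]
    {μ : Measure Ω} [IsFiniteMeasure μ] (hT : Continuous T) (hPRP : μ (PRP T)ᶜ = 0)
    {δ : ℝ} (hδ : 0 < δ) (R k : ℕ) {η : ℝ≥0∞} (hη : η ≠ 0) :
    ∃ Q, μ (⋃ q ∈ Finset.Ioc k Q, repetitionSet T R δ q)ᶜ ≤ η := by
  set s : ℕ → Set Ω := fun Q => (⋃ q ∈ Finset.Ioc k Q, repetitionSet T R δ q)ᶜ
  have hanti : Antitone s := fun Q Q' hQQ' => Set.compl_subset_compl.mpr <|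
    Set.biUnion_subset_biUnion_left fun q hq => by
      simp only [Finset.coe_Ioc, Set.mem_Ioc] at hq ⊢; omega
  have hmeas : ∀ Q, NullMeasurableSet (s Q) μ := fun Q =>
    (Finset.measurableSet_biUnion _ fun q _ =>
      (isClosed_repetitionSet hT R δ q).measurableSet).compl.nullMeasurableSet
  have hlim : μ (⋂ Q, s Q) = 0 := by
    refine measure_mono_null (fun x hx => Set.mem_compl fun hxPRP => ?_) hPRP
    obtain ⟨q, hkq, hq⟩ := RepetitionProperty.exists_gt hxPRP hδ R k
    exact Set.mem_iInter.mp hx q (Set.mem_biUnion (Finset.mem_Ioc.mpr ⟨hkq, le_rfl⟩) hq)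
  obtain ⟨Q, hQ⟩ := ((tendsto_measure_iInter_atTop hmeas hanti
    ⟨0, measure_ne_top μ _⟩).eventually (gt_mem_nhds (hlim ▸ pos_iff_ne_zero.mpr hη))).exists
  exact ⟨Q, hQ.le⟩

end RepetitionSet

/-- `V` is `q`-periodic on `[1 - q, 2 q]`. -/
def IsWindowPeriodic (V : ℤ → ℝ) (q : ℕ) : Prop :=
  ∀ n : ℤ, 1 ≤ n → n ≤ q → V (n + q) = V n ∧ V (n - q) = V n

section Orbits

variable {Ω : Type*} [TopologicalSpace Ω] (T : Ω ≃ₜ Ω)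

theorem toEquiv_zpow_natCast_apply (n : ℕ) (x : Ω) : (T.toEquiv ^ (n : ℤ)) x = (⇑T)^[n] x := by
  rw [zpow_natCast, ← Equiv.Perm.iterate_eq_pow, Homeomorph.coe_toEquiv]

theorem toEquiv_zpow_apply_iterate {z : ℤ} {l j : ℕ} (h : z + l = j) (b : Ω) :
    (T.toEquiv ^ z) ((⇑T)^[l] b) = (⇑T)^[j] b := by
  rw [← toEquiv_zpow_natCast_apply, ← Equiv.Perm.mul_apply, ← zpow_add, h,
    toEquiv_zpow_natCast_apply]

theorem isWindowPeriodic_of_iterate {g : Ω → ℝ} {b : Ω} {q M : ℕ}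
    (hper : ∀ w, w + q < M → g ((⇑T)^[w + q] b) = g ((⇑T)^[w] b)) {l : ℕ} (hql : q ≤ l)
    (hlM : l + 2 * q < M) :
    IsWindowPeriodic (fun n : ℤ => g ((T.toEquiv ^ n) ((⇑T)^[l] b))) q := by
  intro n hn₁ hnq
  lift n to ℕ using (by omega)
  simp only
  rw [toEquiv_zpow_apply_iterate T (j := l + n + q) (by push_cast; ring),
    toEquiv_zpow_apply_iterate T (j := l + n) (by push_cast; ring),
    toEquiv_zpow_apply_iterate T (j := l + n - q) (by push_cast [show q ≤ l + n by omega]; ring)]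
  refine ⟨hper _ (by omega), ?_⟩
  rw [← hper _ (by omega), Nat.sub_add_cancel (by omega)]

/-- A periodic orbit would be a finite dense set. -/
theorem iterate_ne_self_of_minimal [T1Space Ω] [Infinite Ω]
    (hmin : ∀ ω : Ω, Dense (Set.range fun n : ℤ => (T.toEquiv ^ n) ω)) (x : Ω) {i : ℕ}
    (hi : 0 < i) : (⇑T)^[i] x ≠ x := by
  intro hper
  have hfix : (T.toEquiv ^ (i : ℤ)) x = x := by rw [toEquiv_zpow_natCast_apply, hper]
  have horbit : (Set.range fun n : ℤ => (T.toEquiv ^ n) x) ⊆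
      (fun j : ℕ => (⇑T)^[j] x) '' Set.Iio i := by
    rintro _ ⟨n, rfl⟩
    have hmod : 0 ≤ n % i := Int.emod_nonneg n (by omega)
    have hlt : n % i < i := Int.emod_lt_of_pos n (by omega)
    refine ⟨(n % i).toNat, by simp only [Set.mem_Iio]; omega, ?_⟩
    dsimp only
    rw [← toEquiv_zpow_natCast_apply, Int.toNat_of_nonneg hmod]
    conv_rhs => rw [← Int.emod_add_mul_ediv n i, zpow_add, zpow_mul, Equiv.Perm.mul_apply,
      Equiv.Perm.zpow_apply_eq_self_of_apply_eq_self hfix]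
  have hfin := (Set.finite_Iio i).image (fun j : ℕ => (⇑T)^[j] x) |>.subset horbit
  have huniv := (hmin x).closure_eq
  rw [hfin.isClosed.closure_eq] at huniv
  exact Set.infinite_univ (huniv ▸ hfin)

theorem injective_iterate_of_minimal [T1Space Ω] [Infinite Ω]
    (hmin : ∀ ω : Ω, Dense (Set.range fun n : ℤ => (T.toEquiv ^ n) ω)) (x : Ω) :
    Function.Injective fun n : ℕ => (⇑T)^[n] x := by
  suffices h : ∀ a b : ℕ, a < b → (⇑T)^[a] x ≠ (⇑T)^[b] x by
    intro a b hab
    by_contra hne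
    rcases Nat.lt_or_gt_of_ne hne with hlt | hlt
    · exact h a b hlt hab
    · exact h b a hlt hab.symm
  intro a b hab heq
  refine iterate_ne_self_of_minimal T hmin ((⇑T)^[a] x) (Nat.sub_pos_of_lt hab) ?_
  rw [← Function.iterate_add_apply, Nat.sub_add_cancel hab.le, heq]

variable [MeasurableSpace Ω] [BorelSpace Ω] {μ : Measure Ω}

theorem measurePreserving_toEquiv_zpow (hT : MeasurePreserving T μ μ) (n : ℤ) :
    MeasurePreserving (T.toEquiv ^ n) μ μ := by
  have hTsymm : MeasurePreserving T.symm μ μ :=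
    (show MeasurePreserving T.toMeasurableEquiv μ μ from hT).symm
  induction n using Int.induction_on with
  | zero => exact MeasurePreserving.id μ
  | succ n ih => rw [zpow_add_one, Equiv.Perm.coe_mul]; exact ih.comp hT
  | pred n ih => rw [zpow_sub_one, Equiv.Perm.coe_mul]; exact ih.comp hTsymm

theorem isOpenPosMeasure_of_minimal [NeZero μ] (hT : MeasurePreserving T μ μ)
    (hmin : ∀ ω : Ω, Dense (Set.range fun n : ℤ => (T.toEquiv ^ n) ω)) :
    μ.IsOpenPosMeasure := by
  refine ⟨fun U hU hne hU0 => NeZero.ne μ ?_⟩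
  have hcover : (Set.univ : Set Ω) ⊆ ⋃ n : ℤ, (T.toEquiv ^ n) ⁻¹' U := fun y _ => by
    obtain ⟨_, hn, ⟨n, rfl⟩⟩ := (hmin y).inter_open_nonempty U hU hne
    exact Set.mem_iUnion.mpr ⟨n, hn⟩
  refine Measure.measure_univ_eq_zero.mp
    (measure_mono_null hcover (measure_iUnion_null fun n => ?_))
  rwa [(measurePreserving_toEquiv_zpow T hT n).measure_preimage hU.measurableSet.nullMeasurableSet]

/-- An atom would be repeated at the infinitely many distinct points of its forward orbit. -/
theorem nullSingletonClass_of_minimal [T1Space Ω] [Infinite Ω] [IsFiniteMeasure μ]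
    (hT : MeasurePreserving T μ μ)
    (hmin : ∀ ω : Ω, Dense (Set.range fun n : ℤ => (T.toEquiv ^ n) ω)) :
    NullSingletonClass μ := by
  refine ⟨fun x => by_contra fun hx => ?_⟩
  have hinj := injective_iterate_of_minimal T hmin x
  have hsum : μ (⋃ n : ℕ, {(⇑T)^[n] x}) = ∑' _ : ℕ, μ {x} := by
    rw [measure_iUnion (fun a b hab => Set.disjoint_singleton.mpr (hinj.ne hab))
      fun _ => measurableSet_singleton _]
    refine tsum_congr fun n => ?_
    rw [← (hT.iterate n).measure_preimage (measurableSet_singleton _).nullMeasurableSet,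
      ← Set.image_singleton, (T.injective.iterate n).preimage_image]
  exact measure_ne_top μ _ (hsum.trans (ENNReal.tsum_const_eq_top_of_ne_zero hx))

end Orbits

theorem exists_measurableSet_measure_pos_le {X : Type*} [MetricSpace X] [MeasurableSpace X]
    [OpensMeasurableSpace X] [Nonempty X] {μ : Measure X} [IsFiniteMeasure μ]
    [NullSingletonClass μ] [μ.IsOpenPosMeasure] {ε : ℝ≥0∞} (hε : ε ≠ 0) :
    ∃ A : Set X, MeasurableSet A ∧ 0 < μ A ∧ μ A ≤ ε := by
  obtain ⟨x⟩ := ‹Nonempty X›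
  have hlim : Tendsto (fun r => μ (Metric.cthickening r {x})) (𝓝[>] 0) (𝓝 0) := by
    simpa using (tendsto_measure_cthickening_of_isClosed (μ := μ)
      ⟨1, one_pos, measure_ne_top μ _⟩ isClosed_singleton).mono_left nhdsWithin_le_nhds
  obtain ⟨r, hsmall, hr⟩ :=
    ((hlim.eventually (gt_mem_nhds (pos_iff_ne_zero.mpr hε))).and self_mem_nhdsWithin).exists
  rw [Metric.cthickening_singleton x (le_of_lt hr)] at hsmall
  exact ⟨_, Metric.isClosed_closedBall.measurableSet,
    (Metric.isOpen_ball.measure_pos μ ⟨x, Metric.mem_ball_self hr⟩).trans_le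
      (measure_mono Metric.ball_subset_closedBall), hsmall.le⟩

section PRP

variable {Ω : Type*} [MetricSpace Ω] [CompactSpace Ω] (T : Ω ≃ₜ Ω)

theorem apply_mem_PRP_iff {ω : Ω} : T ω ∈ PRP T ↔ ω ∈ PRP T := by
  have horbit : ∀ x : Ω, (fun k => (⇑T)^[k] (T x)) = T ∘ fun k => (⇑T)^[k] x :=
    fun x => funext fun k => (Function.Commute.self_iterate T k x).symm
  have huc : ∀ S : Ω ≃ₜ Ω, UniformContinuous S :=
    fun S => CompactSpace.uniformContinuous_of_continuous S.continuous
  constructor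
  · intro h
    simpa [PRP, horbit, Function.comp_def] using RepetitionProperty.comp h (huc T.symm)
  · intro h
    simpa [PRP, horbit] using RepetitionProperty.comp h (huc T)

theorem measure_compl_PRP [MeasurableSpace Ω] [BorelSpace Ω] {μ : Measure Ω}
    [IsProbabilityMeasure μ] (herg : Ergodic T μ) (hMRP : 0 < μ (PRP T)) : μ (PRP T)ᶜ = 0 :=
  (prob_compl_eq_zero_iff (measurableSet_PRP T.continuous)).mpr <|
    (herg.toPreErgodic.prob_eq_zero_or_one (measurableSet_PRP T.continuous)
      (Set.ext fun _ => apply_mem_PRP_iff T)).resolve_left hMRP.ne'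

end PRP

/-- Greedy cutting of `ℕ` into consecutive blocks, a block starting at `s` having length
`len s`: `scan len n` is the position of `n` inside its block. -/
def scan (len : ℕ → ℕ) : ℕ → ℕ
  | 0 => 0
  | n + 1 => if scan len n + 1 < len (n - scan len n) then scan len n + 1 else 0

namespace scan

variable {len : ℕ → ℕ}

theorem le_self (n : ℕ) : scan len n ≤ n := by
  induction n with
  | zero => rfl
  | succ n ih => simp only [scan]; split <;> omega

theorem lt_len (hlen : ∀ s, 0 < len s) (n : ℕ) : scan len n < len (n - scan len n) := by
  induction n with
  | zero => exact hlen 0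
  | succ n ih =>
    simp only [scan]
    split
    · rwa [show n + 1 - (scan len n + 1) = n - scan len n by omega]
    · exact hlen _

theorem add_of_eq_zero {n : ℕ} (h0 : scan len n = 0) {i : ℕ} (hi : i < len n) :
    scan len (n + i) = i := by
  induction i with
  | zero => exact h0
  | succ i ih =>
    rw [← add_assoc, scan, ih (by omega), if_pos (by rwa [Nat.add_sub_cancel])]

theorem sub_of_eq {n l : ℕ} (h : scan len n = l) {i : ℕ} (hi : i ≤ l) :
    scan len (n - i) = l - i := by
  induction i with
  | zero => exact h
  | succ i ih =>
    have hn : n - i = n - (i + 1) + 1 := by have := le_self (len := len) n; omega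
    have hprev := ih (by omega)
    rw [hn, scan] at hprev
    split at hprev <;> omega

end scan

theorem measurable_apply_index {α β : Type*} [MeasurableSpace α] [MeasurableSpace β]
    {F : ℕ → α → β} (hF : ∀ n, Measurable (F n)) {N : α → ℕ} (hN : Measurable N) :
    Measurable fun x => F (N x) x :=
  (measurable_from_prod_countable_left (f := fun p : α × ℕ => F p.2 p.1) hF).comp
    (measurable_id.prodMk hN)

section Skyscraper

variable {Ω : Type*} [TopologicalSpace Ω] (T : Ω ≃ₜ Ω) (A : Set Ω)

def sweep : Set Ω := ⋃ n : ℕ, (⇑T.symm)^[n] ⁻¹' A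

theorem exists_visit (x : Ω) : ∃ n : ℕ, x ∈ sweep T A → (⇑T.symm)^[n] x ∈ A := by
  by_cases hx : x ∈ sweep T A
  · obtain ⟨n, hn⟩ := Set.mem_iUnion.mp hx
    exact ⟨n, fun _ => hn⟩
  · exact ⟨0, fun h => absurd h hx⟩

open Classical in
/-- The time elapsed since the last visit to `A` (junk value `0` outside `sweep T A`). -/
noncomputable def visitAge (x : Ω) : ℕ := Nat.find (exists_visit T A x)

noncomputable def lastVisit (x : Ω) : Ω := (⇑T.symm)^[visitAge T A x] x

variable {T A}

theorem lastVisit_mem {x : Ω} (hx : x ∈ sweep T A) : lastVisit T A x ∈ A := by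
  classical
  exact Nat.find_spec (exists_visit T A x) hx

theorem iterate_lastVisit (x : Ω) : (⇑T)^[visitAge T A x] (lastVisit T A x) = x :=
  (Function.RightInverse.iterate T.apply_symm_apply _) x

theorem iterate_lastVisit_notMem (x : Ω) {i : ℕ} (hi₀ : 0 < i)
    (hi : i ≤ visitAge T A x) : (⇑T)^[i] (lastVisit T A x) ∉ A := by
  classical
  have hback : (⇑T)^[i] (lastVisit T A x) = (⇑T.symm)^[visitAge T A x - i] x := by
    rw [lastVisit, show visitAge T A x = i + (visitAge T A x - i) by omega,
      Function.iterate_add_apply, (Function.RightInverse.iterate T.apply_symm_apply _)]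
    congr 1; omega
  rw [hback]
  have hlt : visitAge T A x - i < visitAge T A x := by omega
  exact fun hmem => Nat.find_min (exists_visit T A x) hlt fun _ => hmem

theorem visitAge_iterate {b : Ω} (hb : b ∈ A) {n : ℕ}
    (hn : ∀ i, 0 < i → i ≤ n → (⇑T)^[i] b ∉ A) :
    (⇑T)^[n] b ∈ sweep T A ∧ visitAge T A ((⇑T)^[n] b) = n ∧
      lastVisit T A ((⇑T)^[n] b) = b := by
  classical
  have hback : ∀ j ≤ n, (⇑T.symm)^[j] ((⇑T)^[n] b) = (⇑T)^[n - j] b := fun j hj => by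
    conv_lhs => rw [show n = j + (n - j) by omega, Function.iterate_add_apply]
    exact (Function.LeftInverse.iterate T.symm_apply_apply j) _
  have hmem : (⇑T)^[n] b ∈ sweep T A :=
    Set.mem_iUnion.mpr ⟨n, by rw [Set.mem_preimage, hback n le_rfl, Nat.sub_self]; exact hb⟩
  have hage : visitAge T A ((⇑T)^[n] b) = n := by
    refine (Nat.find_eq_iff _).mpr ⟨fun _ => by rw [hback n le_rfl, Nat.sub_self]; exact hb,
      fun j hj hvisit => hn (n - j) (by omega) (by omega) ?_⟩
    rw [← hback j hj.le]
    exact hvisit hmem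
  refine ⟨hmem, hage, ?_⟩
  rw [lastVisit, hage, hback n le_rfl, Nat.sub_self, Function.iterate_zero_apply]

variable {h : Ω → ℕ}

variable (T A h) in
def IsTowerBase (y : Ω) : Prop := 0 < h y ∧ ∀ i, 0 < i → i < h y → (⇑T)^[i] y ∉ A

open Classical in
variable (T A h) in
noncomputable def blockLen (y : Ω) : ℕ := if IsTowerBase T A h y then h y else 1

variable (T A h) in
/-- Position of `x` in the greedy cutting of the orbit segment from its last visit to `A`
into blocks of length `blockLen`. -/
noncomputable def blockOffset (x : Ω) : ℕ :=
  scan (fun j => blockLen T A h ((⇑T)^[j] (lastVisit T A x))) (visitAge T A x)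

variable (T A h) in
noncomputable def blockStart (x : Ω) : Ω := (⇑T.symm)^[blockOffset T A h x] x

variable (T A h) in
def towerBase : Set Ω := {y | y ∈ sweep T A ∧ blockOffset T A h y = 0 ∧ IsTowerBase T A h y}

theorem blockLen_pos (y : Ω) : 0 < blockLen T A h y := by
  unfold blockLen; split_ifs with hy
  exacts [hy.1, one_pos]

theorem blockOffset_iterate {b : Ω} (hb : b ∈ A) {n : ℕ}
    (hn : ∀ i, 0 < i → i ≤ n → (⇑T)^[i] b ∉ A) :
    blockOffset T A h ((⇑T)^[n] b) = scan (fun j => blockLen T A h ((⇑T)^[j] b)) n := by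
  obtain ⟨-, hage, hlast⟩ := visitAge_iterate hb hn
  rw [blockOffset, hage, hlast]

theorem blockOffset_iterate_of_mem_towerBase {y : Ω} (hy : y ∈ towerBase T A h) {l : ℕ}
    (hl : l < h y) : blockOffset T A h ((⇑T)^[l] y) = l := by
  obtain ⟨hsweep, hoff, hbase⟩ := hy
  set b := lastVisit T A y
  set N := visitAge T A y
  have hyb : (⇑T)^[N] b = y := iterate_lastVisit y
  have havoid : ∀ i, 0 < i → i ≤ N + l → (⇑T)^[i] b ∉ A := by
    intro i hi₀ hi
    by_cases hiN : i ≤ N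
    · exact iterate_lastVisit_notMem y hi₀ hiN
    · rw [show i = (i - N) + N by omega, Function.iterate_add_apply, hyb]
      exact hbase.2 _ (by omega) (by omega)
  have hlen : blockLen T A h ((⇑T)^[N] b) = h y := by rw [hyb, blockLen, if_pos hbase]
  have hoff' : scan (fun j => blockLen T A h ((⇑T)^[j] b)) N = 0 := by
    rwa [← blockOffset_iterate (lastVisit_mem hsweep) fun i hi₀ hi => havoid i hi₀ (by omega),
      hyb]
  rw [← hyb, ← Function.iterate_add_apply, add_comm, blockOffset_iterate (lastVisit_mem hsweep)
    havoid]
  exact scan.add_of_eq_zero hoff' (by simpa [hlen] using hl)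

theorem blockStart_spec {x : Ω} (hx : x ∈ sweep T A) :
    blockStart T A h x ∈ sweep T A ∧ blockOffset T A h (blockStart T A h x) = 0 ∧
      blockOffset T A h x < blockLen T A h (blockStart T A h x) ∧
      (⇑T)^[blockOffset T A h x] (blockStart T A h x) = x := by
  set b := lastVisit T A x
  set N := visitAge T A x
  set len := fun j => blockLen T A h ((⇑T)^[j] b)
  set l := blockOffset T A h x
  have hl : scan len N = l := rfl
  have hlN : l ≤ N := scan.le_self N
  have hxb : (⇑T)^[N] b = x := iterate_lastVisit x
  have hyb : blockStart T A h x = (⇑T)^[N - l] b := by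
    calc blockStart T A h x = (⇑T.symm)^[l] ((⇑T)^[l] ((⇑T)^[N - l] b)) := by
          rw [← Function.iterate_add_apply, Nat.add_sub_cancel' hlN, hxb]; rfl
      _ = (⇑T)^[N - l] b := Function.LeftInverse.iterate T.symm_apply_apply l _
  have hb := lastVisit_mem hx
  have havoid : ∀ i, 0 < i → i ≤ N - l → (⇑T)^[i] b ∉ A :=
    fun i hi₀ hi => iterate_lastVisit_notMem x hi₀ (by omega)
  refine ⟨hyb ▸ (visitAge_iterate hb havoid).1, ?_, ?_, ?_⟩
  · rw [hyb, blockOffset_iterate hb havoid]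
    simpa using scan.sub_of_eq hl le_rfl
  · rw [hyb, ← hl]
    exact scan.lt_len (fun _ => blockLen_pos _) N
  · exact (Function.RightInverse.iterate T.apply_symm_apply l) x

theorem exists_towerBase_or_not_isTowerBase {x : Ω} (hx : x ∈ sweep T A) :
    (∃ y ∈ towerBase T A h, ∃ l < h y, (⇑T)^[l] y = x) ∨ ¬ IsTowerBase T A h x := by
  obtain ⟨hsweep, hoff, hlt, hx'⟩ := blockStart_spec (h := h) hx
  by_cases hbase : IsTowerBase T A h (blockStart T A h x)
  · rw [blockLen, if_pos hbase] at hlt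
    exact Or.inl ⟨_, ⟨hsweep, hoff, hbase⟩, _, hlt, hx'⟩
  · rw [blockLen, if_neg hbase, Nat.lt_one_iff] at hlt
    rw [hlt, Function.iterate_zero_apply] at hx'
    exact Or.inr (hx' ▸ hbase)

theorem eq_of_iterate_eq_of_mem_towerBase {y y' : Ω} (hy : y ∈ towerBase T A h)
    (hy' : y' ∈ towerBase T A h) {l l' : ℕ} (hl : l < h y) (hl' : l' < h y')
    (heq : (⇑T)^[l] y = (⇑T)^[l'] y') : l = l' ∧ y = y' := by
  have hll' : l = l' := by
    rw [← blockOffset_iterate_of_mem_towerBase hy hl, heq,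
      blockOffset_iterate_of_mem_towerBase hy' hl']
  subst hll'
  exact ⟨rfl, T.injective.iterate l heq⟩

section Measurable

variable [MeasurableSpace Ω] {μ : Measure Ω}

theorem measure_not_isTowerBase_le (hT : MeasurePreserving T μ μ) (hA : MeasurableSet A)
    {M : ℕ} (hM : ∀ y, h y ≤ M) :
    μ {y | ¬ IsTowerBase T A h y} ≤ μ {y | h y = 0} + M * μ A := by
  have hsub : {y | ¬ IsTowerBase T A h y} ⊆
      {y | h y = 0} ∪ ⋃ i ∈ Finset.range M, (⇑T)^[i] ⁻¹' A := by
    intro y hy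
    simp only [IsTowerBase, not_and_or, not_lt, Nat.le_zero, not_forall, not_not] at hy
    rcases hy with hy | ⟨i, -, hi, hiA⟩
    · exact Or.inl hy
    · exact Or.inr (Set.mem_biUnion (Finset.mem_range.mpr (hi.trans_le (hM y))) hiA)
  calc μ {y | ¬ IsTowerBase T A h y}
      ≤ μ {y | h y = 0} + ∑ i ∈ Finset.range M, μ ((⇑T)^[i] ⁻¹' A) :=
        (measure_mono hsub).trans ((measure_union_le _ _).trans
          (add_le_add le_rfl (measure_biUnion_finset_le _ _)))
    _ = μ {y | h y = 0} + M * μ A := by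
        simp [(hT.iterate _).measure_preimage hA.nullMeasurableSet]

variable [BorelSpace Ω]

theorem measurableSet_sweep (hA : MeasurableSet A) : MeasurableSet (sweep T A) :=
  .iUnion fun n => (T.symm.continuous.iterate n).measurable hA

theorem measurable_visitAge (hA : MeasurableSet A) : Measurable (visitAge T A) := by
  classical
  refine measurable_find (exists_visit T A) fun n => ?_
  exact (measurableSet_sweep hA).himp ((T.symm.continuous.iterate n).measurable hA)

theorem measurable_lastVisit (hA : MeasurableSet A) : Measurable (lastVisit T A) :=
  measurable_apply_index (fun n => (T.symm.continuous.iterate n).measurable)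
    (measurable_visitAge hA)

theorem measurableSet_isTowerBase (hA : MeasurableSet A) (hh : Measurable h) :
    MeasurableSet {y | IsTowerBase T A h y} := by
  refine Measurable.setOf (.and ?_ (.forall fun i => .imp measurable_const (.imp ?_ ?_)))
  · exact (measurable_of_countable _).comp hh
  · exact (measurable_of_countable _).comp hh
  · exact ((T.continuous.iterate i).measurable hA).compl.mem

theorem measurable_blockLen (hA : MeasurableSet A) (hh : Measurable h) :
    Measurable (blockLen T A h) := by
  classical
  exact Measurable.ite (measurableSet_isTowerBase hA hh) hh measurable_const

theorem measurable_scan_blockLen (hA : MeasurableSet A) (hh : Measurable h) (n : ℕ) :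
    Measurable fun b => scan (fun j => blockLen T A h ((⇑T)^[j] b)) n := by
  have hlen : ∀ j, Measurable fun b => blockLen T A h ((⇑T)^[j] b) :=
    fun j => (measurable_blockLen hA hh).comp (T.continuous.iterate j).measurable
  induction n with
  | zero => exact measurable_const
  | succ n ih =>
    simp only [scan]
    refine Measurable.ite ?_ ((measurable_of_countable _).comp ih) measurable_const
    refine Measurable.setOf ((measurable_of_countable fun p : ℕ × ℕ => p.1 + 1 < p.2).comp
      (ih.prodMk ?_))
    exact measurable_apply_index hlen ((measurable_of_countable (n - ·)).comp ih)

theorem measurable_blockOffset (hA : MeasurableSet A) (hh : Measurable h) :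
    Measurable (blockOffset T A h) :=
  measurable_apply_index
    (fun n => (measurable_scan_blockLen hA hh n).comp (measurable_lastVisit hA))
    (measurable_visitAge hA)

theorem measurableSet_towerBase (hA : MeasurableSet A) (hh : Measurable h) :
    MeasurableSet (towerBase T A h) :=
  (measurableSet_sweep hA).inter
    (((measurable_blockOffset hA hh) (measurableSet_singleton 0)).inter
      (measurableSet_isTowerBase hA hh))

theorem measure_compl_sweep [IsProbabilityMeasure μ] (herg : Ergodic T μ)
    (hA : MeasurableSet A) (hA₀ : 0 < μ A) : μ (sweep T A)ᶜ = 0 := by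
  have hsweep := measurableSet_sweep (T := T) hA
  have hinv : sweep T A ⊆ (⇑T) ⁻¹' sweep T A := fun x hx => by
    obtain ⟨n, hn⟩ := Set.mem_iUnion.mp hx
    refine Set.mem_iUnion.mpr ⟨n + 1, ?_⟩
    rwa [Set.mem_preimage, Function.iterate_succ_apply, T.symm_apply_apply]
  rcases herg.ae_empty_or_univ_of_ae_le_preimage hsweep.nullMeasurableSet
      hinv.eventuallyLE with h0 | h1
  · have := measure_mono (μ := μ) (show A ⊆ sweep T A from Set.subset_iUnion_of_subset 0 le_rfl)
    rw [measure_congr h0, measure_empty] at this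
    exact absurd (le_antisymm this zero_le) hA₀.ne'
  · rw [← ae_eq_univ]; exact h1

end Measurable

end Skyscraper

section Towers

variable {Ω : Type*} [TopologicalSpace Ω] (T : Ω ≃ₜ Ω)

/-- The level `Tˡ B` of the tower over `B`. -/
def towerLevel (B : Set Ω) (l : ℕ) : Set Ω := (⇑T.symm)^[l] ⁻¹' B

def towerIndex (I : Finset ℕ) (m : ℕ) : Finset (Σ _ : ℕ, ℕ) :=
  I.sigma fun q => Finset.range (m * q)

/-- Levels `l` of a tower of height `m q` whose window `[l + 1 - q, l + 2 q]` stays inside the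
tower. -/
def goodIndex (I : Finset ℕ) (m : ℕ) : Finset (Σ _ : ℕ, ℕ) :=
  (towerIndex I m).filter fun p => p.1 ≤ p.2 ∧ p.2 + 2 * p.1 < m * p.1

variable {T}

theorem mem_towerLevel_iterate {B : Set Ω} {y : Ω} (hy : y ∈ B) (l : ℕ) :
    (⇑T)^[l] y ∈ towerLevel T B l := by
  rw [towerLevel, Set.mem_preimage, Function.LeftInverse.iterate T.symm_apply_apply l]
  exact hy

theorem card_filter_not_good_le (q m : ℕ) :
    ((Finset.range (m * q)).filter fun l => ¬ (q ≤ l ∧ l + 2 * q < m * q)).card ≤ 3 * q := by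
  calc _ ≤ (Finset.range q ∪ Finset.Ico (m * q - 2 * q) (m * q)).card := by
        refine Finset.card_le_card fun l hl => ?_
        simp only [Finset.mem_filter, Finset.mem_range] at hl
        simp only [Finset.mem_union, Finset.mem_range, Finset.mem_Ico]
        omega
    _ ≤ q + 2 * q := by
        refine (Finset.card_union_le _ _).trans ?_
        simp only [Finset.card_range, Nat.card_Ico]
        omega
    _ = 3 * q := by ring

theorem pairwiseDisjoint_towerLevel_towerBase {A : Set Ω} {c : Ω → ℕ} {I : Finset ℕ} {m : ℕ} :
    (towerIndex I m : Set (Σ _ : ℕ, ℕ)).PairwiseDisjoint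
      (fun p => towerLevel T (towerBase T A (fun x => m * c x) ∩ c ⁻¹' {p.1}) p.2) := by
  rintro ⟨q, l⟩ hp ⟨q', l'⟩ hp' hne
  simp only [towerIndex, Finset.coe_sigma, Set.mem_sigma_iff, Finset.mem_coe,
    Finset.mem_range] at hp hp'
  refine Set.disjoint_left.mpr fun x ⟨hy, hyq⟩ ⟨hy', hyq'⟩ => hne ?_
  simp only [Set.mem_preimage, Set.mem_singleton_iff] at hyq hyq'
  obtain ⟨rfl, heq⟩ := eq_of_iterate_eq_of_mem_towerBase hy hy'
    (by simp only [hyq, hp.2]) (by simp only [hyq', hp'.2])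
    (((Function.RightInverse.iterate T.apply_symm_apply l) x).trans
      ((Function.RightInverse.iterate T.apply_symm_apply l') x).symm)
  rw [← hyq, ← hyq', heq]

theorem compl_biUnion_towerLevel_subset {A : Set Ω} {c : Ω → ℕ} {I : Finset ℕ}
    (hcI : ∀ x, c x = 0 ∨ c x ∈ I) {m : ℕ} :
    (⋃ p ∈ towerIndex I m, towerLevel T (towerBase T A (fun x => m * c x) ∩ c ⁻¹' {p.1}) p.2)ᶜ ⊆
      (sweep T A)ᶜ ∪ {y | ¬ IsTowerBase T A (fun x => m * c x) y} := by
  intro x hx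
  by_cases hsweep : x ∈ sweep T A
  · refine Or.inr ((exists_towerBase_or_not_isTowerBase hsweep).resolve_left ?_)
    rintro ⟨y, hy, l, hl, rfl⟩
    have hcy : c y ∈ I := (hcI y).resolve_left fun h0 => by simp [h0] at hl
    exact hx (Set.mem_biUnion (x := ⟨c y, l⟩) (Finset.mem_sigma.mpr
      ⟨hcy, Finset.mem_range.mpr hl⟩)
      (mem_towerLevel_iterate (B := towerBase T A _ ∩ c ⁻¹' {c y}) ⟨hy, rfl⟩ l))
  · exact Or.inl hsweep

variable [MeasurableSpace Ω] [BorelSpace Ω] {μ : Measure Ω}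

theorem measure_towerLevel (hT : MeasurePreserving T μ μ) {B : Set Ω} (hB : MeasurableSet B)
    (l : ℕ) : μ (towerLevel T B l) = μ B :=
  (((show MeasurePreserving T.toMeasurableEquiv μ μ from hT).symm).iterate l).measure_preimage
    hB.nullMeasurableSet

/-- **Kakutani–Rokhlin towers**, cut greedily out of the orbit segments between consecutive
visits to the marker `A` (see `blockOffset`). -/
theorem exists_towers [IsProbabilityMeasure μ] (herg : Ergodic T μ) {A : Set Ω}
    (hA : MeasurableSet A) (hA₀ : 0 < μ A) {c : Ω → ℕ} (hc : Measurable c) {I : Finset ℕ}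
    (hcI : ∀ x, c x = 0 ∨ c x ∈ I) {m : ℕ} (hm : 0 < m) :
    ∃ B : ℕ → Set Ω, (∀ q, MeasurableSet (B q)) ∧ (∀ q, B q ⊆ c ⁻¹' {q}) ∧
      (towerIndex I m : Set (Σ _ : ℕ, ℕ)).PairwiseDisjoint (fun p => towerLevel T (B p.1) p.2) ∧
      μ (⋃ p ∈ towerIndex I m, towerLevel T (B p.1) p.2)ᶜ ≤
        μ {x | c x = 0} + (m * I.sup id : ℕ) * μ A := by
  set h : Ω → ℕ := fun x => m * c x
  have hM : ∀ x, h x ≤ m * I.sup id := fun x => by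
    rcases hcI x with hx | hx
    · simp [h, hx]
    · exact Nat.mul_le_mul_left m (Finset.le_sup (f := id) hx)
  have hzero : {y | h y = 0} = {x | c x = 0} := by
    ext x; simp [h, hm.ne']
  refine ⟨fun q => towerBase T A h ∩ c ⁻¹' {q}, fun q => ?_, fun q => Set.inter_subset_right,
    pairwiseDisjoint_towerLevel_towerBase, ?_⟩
  · exact (measurableSet_towerBase hA (measurable_const.mul hc)).inter
      (hc (measurableSet_singleton q))
  calc _ ≤ μ (sweep T A)ᶜ + μ {y | ¬ IsTowerBase T A h y} :=
        (measure_mono (compl_biUnion_towerLevel_subset hcI)).trans (measure_union_le _ _)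
    _ ≤ 0 + (μ {y | h y = 0} + (m * I.sup id : ℕ) * μ A) :=
        add_le_add (measure_compl_sweep herg hA hA₀).le
          (measure_not_isTowerBase_le herg.toMeasurePreserving hA hM)
    _ = _ := by rw [zero_add, hzero]

variable {B : ℕ → Set Ω} {I : Finset ℕ} {m : ℕ}

theorem sum_towerIndex_filter (hT : MeasurePreserving T μ μ) (hB : ∀ q, MeasurableSet (B q))
    (P : (Σ _ : ℕ, ℕ) → Prop) [DecidablePred P] :
    ∑ p ∈ (towerIndex I m).filter P, μ (towerLevel T (B p.1) p.2) =
      ∑ q ∈ I, ((Finset.range (m * q)).filter fun l => P ⟨q, l⟩).card * μ (B q) := by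
  simp_rw [Finset.sum_filter, towerIndex, Finset.sum_sigma, measure_towerLevel hT (hB _),
    ← Finset.sum_filter, Finset.sum_const, nsmul_eq_mul]

theorem measure_compl_biUnion_goodIndex_le (hT : MeasurePreserving T μ μ)
    (hB : ∀ q, MeasurableSet (B q)) {K : ℕ → Set Ω}
    (hK : ∀ q, MeasurableSet (K q)) {ι : ℝ≥0∞} (hι : ∀ q, μ (B q \ K q) ≤ ι) :
    μ (⋃ p ∈ goodIndex I m, towerLevel T (K p.1) p.2)ᶜ ≤
      μ (⋃ p ∈ towerIndex I m, towerLevel T (B p.1) p.2)ᶜ +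
        μ (⋃ p ∈ towerIndex I m \ goodIndex I m, towerLevel T (B p.1) p.2) +
        (goodIndex I m).card * ι := by
  have hsub : (⋃ p ∈ goodIndex I m, towerLevel T (K p.1) p.2)ᶜ ⊆
      (⋃ p ∈ towerIndex I m, towerLevel T (B p.1) p.2)ᶜ ∪
        (⋃ p ∈ towerIndex I m \ goodIndex I m, towerLevel T (B p.1) p.2) ∪
        ⋃ p ∈ goodIndex I m, towerLevel T (B p.1 \ K p.1) p.2 := by
    intro x hx
    by_cases hall : x ∈ ⋃ p ∈ towerIndex I m, towerLevel T (B p.1) p.2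
    · obtain ⟨p, hp, hxp⟩ := Set.mem_iUnion₂.mp hall
      by_cases hgood : p ∈ goodIndex I m
      · refine Or.inr (Set.mem_biUnion hgood ⟨hxp, fun hxK => hx ?_⟩)
        exact Set.mem_biUnion hgood hxK
      · exact Or.inl (Or.inr (Set.mem_biUnion (Finset.mem_sdiff.mpr ⟨hp, hgood⟩) hxp))
    · exact Or.inl (Or.inl hall)
  refine (measure_mono hsub).trans ((measure_union_le _ _).trans
    (add_le_add (measure_union_le _ _) ((measure_biUnion_finset_le _ _).trans ?_)))
  rw [← nsmul_eq_mul]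
  exact Finset.sum_le_card_nsmul _ _ _ fun p _ =>
    (measure_towerLevel hT ((hB _).diff (hK _)) _).trans_le (hι _)

/-- Each tower of height `m q` has at most `3 q` levels outside `goodIndex`. -/
theorem mul_measure_biUnion_not_good_le [IsProbabilityMeasure μ] (hT : MeasurePreserving T μ μ)
    (hB : ∀ q, MeasurableSet (B q))
    (hdisj : (towerIndex I m : Set (Σ _ : ℕ, ℕ)).PairwiseDisjoint
      (fun p => towerLevel T (B p.1) p.2)) :
    m * μ (⋃ p ∈ towerIndex I m \ goodIndex I m, towerLevel T (B p.1) p.2) ≤ 3 := by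
  have hlevel : ∀ p : Σ _ : ℕ, ℕ, MeasurableSet (towerLevel T (B p.1) p.2) :=
    fun p => (T.symm.continuous.iterate p.2).measurable (hB p.1)
  have htotal : ∑ q ∈ I, ((m * q : ℕ) : ℝ≥0∞) * μ (B q) ≤ 1 := by
    calc _ = ∑ p ∈ (towerIndex I m).filter (fun _ => True), μ (towerLevel T (B p.1) p.2) := by
          rw [sum_towerIndex_filter hT hB]; simp
      _ = μ (⋃ p ∈ towerIndex I m, towerLevel T (B p.1) p.2) := by
          rw [Finset.filter_true_of_mem fun _ _ => trivial,
            measure_biUnion_finset hdisj fun p _ => hlevel p]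
      _ ≤ 1 := prob_le_one
  rw [goodIndex, ← Finset.filter_not, measure_biUnion_finset
    (hdisj.subset (Finset.coe_subset.mpr (Finset.filter_subset _ _))) fun p _ => hlevel p,
    sum_towerIndex_filter hT hB, Finset.mul_sum]
  calc _ ≤ ∑ q ∈ I, 3 * (((m * q : ℕ) : ℝ≥0∞) * μ (B q)) := by
        refine Finset.sum_le_sum fun q _ => ?_
        have hcard := Nat.mul_le_mul_left m (card_filter_not_good_le q m)
        calc _ = ((m * ((Finset.range (m * q)).filter fun l =>
                  ¬ (q ≤ l ∧ l + 2 * q < m * q)).card : ℕ) : ℝ≥0∞) * μ (B q) := by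
              push_cast; ring
          _ ≤ ((m * (3 * q) : ℕ) : ℝ≥0∞) * μ (B q) := by gcongr
          _ = _ := by push_cast; ring
    _ ≤ 3 := by rw [← Finset.mul_sum]; exact mul_le_of_le_one_right zero_le htotal

end Towers

theorem exists_continuousMap_eqOn_of_pairwiseDisjoint {X ι : Type*} [TopologicalSpace X]
    [NormalSpace X] {s : Finset ι} {Z : ι → Set X} (hZ : ∀ i ∈ s, IsClosed (Z i))
    (hdisj : (s : Set ι).PairwiseDisjoint Z) {v : ι → X → ℝ}
    (hv : ∀ i ∈ s, ContinuousOn (v i) (Z i)) (f : C(X, ℝ)) {ε : ℝ} (hε : 0 ≤ ε)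
    (hvf : ∀ i ∈ s, ∀ x ∈ Z i, |v i x - f x| ≤ ε) :
    ∃ g : C(X, ℝ), (∀ x, |g x - f x| ≤ ε) ∧ ∀ i ∈ s, Set.EqOn g (v i) (Z i) := by
  classical
  set U := ⋃ i : s, Z i
  let w : X → ℝ := fun x => if hx : ∃ i ∈ s, x ∈ Z i then v hx.choose x - f x else 0
  have hw : ∀ i ∈ s, ∀ x ∈ Z i, w x = v i x - f x := fun i hi x hx => by
    have hex : ∃ i ∈ s, x ∈ Z i := ⟨i, hi, hx⟩
    have hchoose : hex.choose = i := by
      by_contra hne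
      exact Set.disjoint_left.mp (hdisj hex.choose_spec.1 hi hne) hex.choose_spec.2 hx
    simp only [w, dif_pos hex, hchoose]
  have hwU : ContinuousOn w U := (locallyFinite_of_finite _).continuousOn_iUnion
    (fun i => hZ i i.2) fun i => ((hv i i.2).sub f.continuous.continuousOn).congr (hw i i.2)
  have hwε : ∀ x : U, w x ∈ Set.Icc (-ε) ε := fun ⟨x, hx⟩ => by
    obtain ⟨⟨i, hi⟩, hxi⟩ := Set.mem_iUnion.mp hx
    rw [Set.mem_Icc, ← abs_le, hw i hi x hxi]
    exact hvf i hi x hxi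
  have hUclosed : IsClosed U := isClosed_iUnion_of_finite fun i => hZ i i.2
  obtain ⟨e, heε, hew⟩ := ContinuousMap.exists_restrict_eq_forall_mem_of_closed
    ⟨U.domRestrict w, hwU.domRestrict⟩ hwε ⟨0, by simp [hε]⟩ hUclosed
  refine ⟨f + e, fun x => ?_, fun i hi x hx => ?_⟩
  · simpa [abs_le] using heε x
  · have hxU : x ∈ U := Set.mem_iUnion.mpr ⟨⟨i, hi⟩, hx⟩
    have hex : e x = w x := congrArg (fun F : C(U, ℝ) => F ⟨x, hxU⟩) hew
    rw [ContinuousMap.add_apply, hex, hw i hi x hx]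
    ring

theorem exists_forall_iterate_eq_mod {Ω : Type*} [MetricSpace Ω] {T : Ω ≃ₜ Ω}
    {K : ℕ → Set Ω} (hK : ∀ q, IsClosed (K q))
    {I : Finset ℕ} {m : ℕ}
    (hdisj : (towerIndex I m : Set (Σ _ : ℕ, ℕ)).PairwiseDisjoint
      (fun p => towerLevel T (K p.1) p.2))
    (f : C(Ω, ℝ)) {δ₀ ε : ℝ} (hδ₀ : 0 < δ₀) (hε : 0 ≤ ε)
    (hf : ∀ x y, dist x y < δ₀ → dist (f x) (f y) < ε)
    (hKrep : ∀ q ∈ I, K q ⊆ repetitionSet T m (δ₀ / (m + 1)) q) :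
    ∃ g : C(Ω, ℝ), (∀ x, |g x - f x| ≤ ε) ∧
      ∀ q ∈ I, ∀ b ∈ K q, ∀ w < m * q, g ((⇑T)^[w] b) = f ((⇑T)^[w % q] b) := by
  obtain ⟨g, hgf, hgv⟩ := exists_continuousMap_eqOn_of_pairwiseDisjoint (s := towerIndex I m)
    (fun p _ => (hK p.1).preimage (T.symm.continuous.iterate p.2)) hdisj
    (v := fun p x => f ((⇑T)^[p.2 % p.1] ((⇑T.symm)^[p.2] x)))
    (fun p _ => (f.continuous.comp ((T.continuous.iterate _).comp
      (T.symm.continuous.iterate _))).continuousOn) f hε fun p hp x hx => by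
      obtain ⟨hq, hl⟩ := Finset.mem_sigma.mp hp
      set b := (⇑T.symm)^[p.2] x
      have hxb : (⇑T)^[p.2] b = x := (Function.RightInverse.iterate T.apply_symm_apply p.2) x
      rw [← Real.dist_eq, ← hxb]
      exact (dist_apply_iterate_mod_lt hδ₀ hf (Finset.mem_range.mp hl)
        (hKrep p.1 hq hx)).le
  refine ⟨g, hgf, fun q hq b hb w hw => ?_⟩
  rw [hgv ⟨q, w⟩ (Finset.mem_sigma.mpr ⟨hq, Finset.mem_range.mpr hw⟩)
    (mem_towerLevel_iterate hb w)]
  simp only [Function.LeftInverse.iterate T.symm_apply_apply w _]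

theorem exists_measurable_label {α : Type*} [MeasurableSpace α] {I : Finset ℕ} (hI : 0 ∉ I)
    {D : ℕ → Set α} (hD : ∀ q, MeasurableSet (D q)) :
    ∃ c : α → ℕ, Measurable c ∧ (∀ x, c x = 0 ∨ c x ∈ I) ∧ (∀ x, c x ∈ I → x ∈ D (c x)) ∧
      {x | c x = 0} = (⋃ q ∈ I, D q)ᶜ := by
  classical
  set W := ⋃ q ∈ I, D q
  let p : α → ℕ → Prop := fun x n => (n ∈ I ∧ x ∈ D n) ∨ (x ∉ W ∧ n = 0)
  have hp : ∀ x, ∃ n, p x n := fun x => by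
    by_cases hx : x ∈ W
    · obtain ⟨q, hq, hxq⟩ := Set.mem_iUnion₂.mp hx
      exact ⟨q, Or.inl ⟨hq, hxq⟩⟩
    · exact ⟨0, Or.inr ⟨hx, rfl⟩⟩
  have hspec : ∀ x, p x (Nat.find (hp x)) := fun x => Nat.find_spec (hp x)
  refine ⟨fun x => Nat.find (hp x), measurable_find hp fun n => ?_, fun x => ?_, fun x hx => ?_, ?_⟩
  · exact Measurable.setOf (.or (measurable_const.and (hD n).mem)
      (((MeasurableSet.biUnion I.countable_toSet fun q _ => hD q).mem.not).and measurable_const))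
  · rcases hspec x with h | h
    exacts [Or.inr h.1, Or.inl h.2]
  · rcases hspec x with h | h
    · exact h.2
    · exact absurd (h.2 ▸ hx) hI
  · ext x
    simp only [Set.mem_ofPred_eq, Set.mem_compl_iff]
    rcases hspec x with h | h
    · exact ⟨fun h0 => absurd (h0 ▸ h.1) hI, fun hx => absurd (Set.mem_biUnion h.1 h.2) hx⟩
    · exact ⟨fun _ => h.1, fun _ => h.2⟩

section Approximation

variable {Ω : Type*} [MetricSpace Ω] [MeasurableSpace Ω] [BorelSpace Ω] {T : Ω ≃ₜ Ω}
  {μ : Measure Ω} [IsProbabilityMeasure μ]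

theorem exists_towers_repetitionSet [NullSingletonClass μ] [μ.IsOpenPosMeasure]
    (herg : Ergodic T μ) (hPRP : μ (PRP T)ᶜ = 0) {δ : ℝ} (hδ : 0 < δ) {m : ℕ} (hm : 0 < m)
    (k : ℕ) {η : ℝ≥0∞} (hη : η ≠ 0) :
    ∃ Q : ℕ, ∃ B : ℕ → Set Ω, (∀ q, MeasurableSet (B q)) ∧
      (∀ q ∈ Finset.Ioc k Q, B q ⊆ repetitionSet T m δ q) ∧
      (towerIndex (Finset.Ioc k Q) m : Set (Σ _ : ℕ, ℕ)).PairwiseDisjoint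
        (fun p => towerLevel T (B p.1) p.2) ∧
      μ (⋃ p ∈ towerIndex (Finset.Ioc k Q) m, towerLevel T (B p.1) p.2)ᶜ ≤ η + η := by
  have := nonempty_of_isProbabilityMeasure μ
  obtain ⟨Q, hQ⟩ := exists_measure_compl_repetitionSet_le T.continuous hPRP hδ m k hη
  obtain ⟨c, hc, hcI, hcD, hc0⟩ := exists_measurable_label (I := Finset.Ioc k Q) (by simp)
    fun q => (isClosed_repetitionSet T.continuous m δ q).measurableSet
  obtain ⟨A, hA, hA₀, hAη⟩ := exists_measurableSet_measure_pos_le (μ := μ)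
    (ENNReal.div_ne_zero.mpr ⟨hη, ENNReal.natCast_ne_top (m * Q)⟩)
  obtain ⟨B, hB, hBc, hdisj, hcover⟩ := exists_towers herg hA hA₀ hc hcI hm
  refine ⟨Q, B, hB, fun q hq x hx => ?_, hdisj, hcover.trans (add_le_add ?_ ?_)⟩
  · have hcx : c x = q := hBc q hx
    exact hcx ▸ hcD x (hcx ▸ hq)
  · rwa [hc0]
  · calc _ ≤ ((m * Q : ℕ) : ℝ≥0∞) * μ A := by
          gcongr
          exact Finset.sup_le fun q hq => (Finset.mem_Ioc.mp hq).2
      _ ≤ ((m * Q : ℕ) : ℝ≥0∞) * (η / (m * Q : ℕ)) := by gcongr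
      _ ≤ η := ENNReal.mul_div_le

theorem exists_isClosed_goodIndex {B : ℕ → Set Ω} {I : Finset ℕ} {m : ℕ}
    (hT : MeasurePreserving T μ μ) (hB : ∀ q, MeasurableSet (B q))
    (hdisj : (towerIndex I m : Set (Σ _ : ℕ, ℕ)).PairwiseDisjoint
      (fun p => towerLevel T (B p.1) p.2))
    {η : ℝ≥0∞} (hη : η ≠ 0) (hmη : 3 ≤ m * η) :
    ∃ K : ℕ → Set Ω, (∀ q, K q ⊆ B q) ∧ (∀ q, IsClosed (K q)) ∧
      μ (⋃ p ∈ goodIndex I m, towerLevel T (K p.1) p.2)ᶜ ≤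
        μ (⋃ p ∈ towerIndex I m, towerLevel T (B p.1) p.2)ᶜ + η + η := by
  have hm : (m : ℝ≥0∞) ≠ 0 := fun h0 => by simp [h0] at hmη
  have hι : η / (goodIndex I m).card ≠ 0 :=
    ENNReal.div_ne_zero.mpr ⟨hη, ENNReal.natCast_ne_top _⟩
  choose K hKB hKc hKμ using fun q => (hB q).exists_isClosed_sdiff_lt (measure_ne_top μ _) hι
  refine ⟨K, hKB, hKc, (measure_compl_biUnion_goodIndex_le hT hB
    (fun q => (hKc q).measurableSet) fun q => (hKμ q).le).trans
    (add_le_add (add_le_add le_rfl ?_) ENNReal.mul_div_le)⟩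
  exact (ENNReal.mul_le_mul_iff_right hm (ENNReal.natCast_ne_top m)).mp
    ((mul_measure_biUnion_not_good_le hT hB hdisj).trans hmη)

variable [CompactSpace Ω]

theorem exists_isWindowPeriodic_approx [NullSingletonClass μ] [μ.IsOpenPosMeasure]
    (herg : Ergodic T μ) (hPRP : μ (PRP T)ᶜ = 0) (f : C(Ω, ℝ)) {ε : ℝ} (hε : 0 < ε) (k : ℕ)
    {η : ℝ≥0∞} (hη : η ≠ 0) :
    ∃ g : C(Ω, ℝ), dist g f < ε ∧ ∃ Q : ℕ, ∃ G : Set Ω, MeasurableSet G ∧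
      μ Gᶜ ≤ η + η + η + η ∧ ∀ ω ∈ G, ∃ q, k < q ∧ q ≤ Q ∧
        IsWindowPeriodic (fun n : ℤ => g ((T.toEquiv ^ n) ω)) q := by
  obtain ⟨m, hm⟩ := ENNReal.exists_nat_gt (ENNReal.div_ne_top (by norm_num : (3 : ℝ≥0∞) ≠ ⊤) hη)
  have hm₀ : 0 < m := by exact_mod_cast zero_le.trans_lt hm
  have hmη : 3 ≤ m * η := (ENNReal.div_le_iff_le_mul (Or.inl hη)
    (Or.inr (by exact_mod_cast hm₀.ne'))).mp hm.le
  obtain ⟨δ₀, hδ₀, hf⟩ := Metric.uniformContinuous_iff.mp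
    (CompactSpace.uniformContinuous_of_continuous f.continuous) (ε / 2) (by positivity)
  obtain ⟨Q, B, hB, hBrep, hdisj, hcover⟩ :=
    exists_towers_repetitionSet herg hPRP (δ := δ₀ / (m + 1)) (by positivity) hm₀ k hη
  obtain ⟨K, hKB, hKc, hG⟩ := exists_isClosed_goodIndex herg.toMeasurePreserving hB hdisj hη hmη
  obtain ⟨g, hgf, hgK⟩ := exists_forall_iterate_eq_mod hKc
    (hdisj.mono fun p => Set.preimage_mono (hKB p.1)) f hδ₀ (by positivity) hf
    fun q hq => (hKB q).trans (hBrep q hq)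
  refine ⟨g, ?_, Q, ⋃ p ∈ goodIndex (Finset.Ioc k Q) m, towerLevel T (K p.1) p.2,
    Finset.measurableSet_biUnion _ fun p _ =>
      ((hKc p.1).preimage (T.symm.continuous.iterate p.2)).measurableSet,
    hG.trans (by gcongr), fun ω hω => ?_⟩
  · exact ((ContinuousMap.dist_le (by positivity)).mpr fun x => by
      rw [Real.dist_eq]; exact hgf x).trans_lt (half_lt_self hε)
  obtain ⟨⟨q, l⟩, hp, hω⟩ := Set.mem_iUnion₂.mp hω
  obtain ⟨hp, hql, hlm⟩ := Finset.mem_filter.mp hp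
  have hq := (Finset.mem_sigma.mp hp).1
  refine ⟨q, (Finset.mem_Ioc.mp hq).1, (Finset.mem_Ioc.mp hq).2, ?_⟩
  rw [← (Function.RightInverse.iterate T.apply_symm_apply l) ω]
  refine isWindowPeriodic_of_iterate T (M := m * q) (fun w hw => ?_) hql hlm
  rw [hgK q hq _ hω _ hw, hgK q hq _ hω _ (by omega), Nat.add_mod_right]

end Approximation

theorem isGordonPotential_of_eventually {V : ℤ → ℝ} (hV : ∃ M, ∀ n, |V n| ≤ M)
    (h : ∀ᶠ k : ℕ in atTop, ∃ q, k < q ∧ ∀ n : ℤ, 1 ≤ n → n ≤ q →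
      |V n - V (n + q)| ≤ (((k : ℝ) + 1) ^ q)⁻¹ ∧ |V n - V (n - q)| ≤ (((k : ℝ) + 1) ^ q)⁻¹) :
    IsGordonPotential V := by
  obtain ⟨N, hN⟩ := eventually_atTop.mp h
  choose q hq hbound using fun k => hN (max k N) (le_max_right k N)
  have hkq : ∀ k, k < q k := fun k => (le_max_left k N).trans_lt (hq k)
  refine ⟨hV, q, fun k => (zero_le.trans_lt (hkq k)), tendsto_atTop_mono (fun k => (hkq k).le)
    tendsto_id, fun k hk n hn₁ hnq => ?_⟩
  have hmono : ((((max k N : ℕ) : ℝ) + 1) ^ q k)⁻¹ ≤ ((k : ℝ) ^ q k)⁻¹ := by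
    have : (k : ℝ) ≤ (max k N : ℕ) + 1 := by exact_mod_cast (le_max_left k N).trans (Nat.le_succ _)
    exact inv_anti₀ (by positivity) (pow_le_pow_left₀ (by positivity) this _)
  exact ⟨(hbound k n hn₁ hnq).1.trans hmono, (hbound k n hn₁ hnq).2.trans hmono⟩

theorem abs_sub_le_two_mul_of_dist_lt {X : Type*} [TopologicalSpace X] [CompactSpace X]
    {f g : C(X, ℝ)} {c : ℝ} (hfg : dist f g < c) {x y : X} (hg : g x = g y) :
    |f x - f y| ≤ 2 * c := by
  have hx := ContinuousMap.dist_apply_le_dist (f := f) (g := g) x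
  have hy := ContinuousMap.dist_apply_le_dist (f := f) (g := g) y
  rw [Real.dist_eq] at hx hy
  calc |f x - f y| = |(f x - g x) - (f y - g y)| := by rw [hg]; ring_nf
    _ ≤ |f x - g x| + |f y - g y| := abs_sub _ _
    _ ≤ 2 * c := by linarith

theorem isGordonPotential_of_eventually_isWindowPeriodic {X : Type*} [TopologicalSpace X]
    [CompactSpace X] {f : C(X, ℝ)} {x : ℤ → X}
    (h : ∀ᶠ k : ℕ in atTop, ∃ g : C(X, ℝ), ∃ c, dist f g < c ∧ ∃ q, k < q ∧
      2 * c ≤ (((k : ℝ) + 1) ^ q)⁻¹ ∧ IsWindowPeriodic (fun n => g (x n)) q) :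
    IsGordonPotential fun n => f (x n) := by
  refine isGordonPotential_of_eventually ⟨‖f‖, fun n => ?_⟩ (h.mono fun k => ?_)
  · simpa using f.norm_coe_le_norm (x n)
  rintro ⟨g, c, hfg, q, hkq, hc, hper⟩
  exact ⟨q, hkq, fun n hn₁ hnq =>
    ⟨(abs_sub_le_two_mul_of_dist_lt hfg (hper n hn₁ hnq).1.symm).trans hc,
      (abs_sub_le_two_mul_of_dist_lt hfg (hper n hn₁ hnq).2.symm).trans hc⟩⟩

theorem measure_liminf_eq_one {α : Type*} [MeasurableSpace α] {μ : Measure α}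
    [IsProbabilityMeasure μ] {s : ℕ → Set α} (hs : ∀ k, MeasurableSet (s k))
    (hsum : ∑' k, μ (s k)ᶜ ≠ ⊤) : μ (liminf s atTop) = 1 := by
  refine (prob_compl_eq_zero_iff (MeasurableSet.measurableSet_liminf hs)).mp
    (measure_mono_null (fun x hx => ?_) (measure_setOfPred_frequently_eq_zero hsum))
  rw [Set.mem_compl_iff, Filter.mem_liminf_iff_eventually_mem, Filter.not_eventually] at hx
  exact hx

section Residual

variable {Ω : Type*} [MetricSpace Ω] [CompactSpace Ω] [MeasurableSpace Ω]
  (T : Ω ≃ₜ Ω) (μ : Measure Ω)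

def gordonApprox (k : ℕ) : Set C(Ω, ℝ) :=
  {f | ∃ g : C(Ω, ℝ), ∃ c, dist f g < c ∧ ∃ G : Set Ω, MeasurableSet G ∧
    μ Gᶜ ≤ 2⁻¹ ^ k ∧ ∀ ω ∈ G, ∃ q, k < q ∧ 2 * c ≤ (((k : ℝ) + 1) ^ q)⁻¹ ∧
      IsWindowPeriodic (fun n : ℤ => g ((T.toEquiv ^ n) ω)) q}

theorem isOpen_gordonApprox (k : ℕ) : IsOpen (gordonApprox T μ k) := by
  refine Metric.isOpen_iff.mpr fun f ⟨g, c, hfg, hG⟩ => ⟨c - dist f g, by linarith,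
    fun f' hf' => ⟨g, c, ?_, hG⟩⟩
  linarith [Metric.mem_ball.mp hf', dist_triangle f' f g]

variable {T μ} [BorelSpace Ω] [IsProbabilityMeasure μ]

theorem dense_gordonApprox [NullSingletonClass μ] [μ.IsOpenPosMeasure] (herg : Ergodic T μ)
    (hPRP : μ (PRP T)ᶜ = 0) (k : ℕ) : Dense (gordonApprox T μ k) := by
  refine Metric.dense_iff.mpr fun f ε hε => ?_
  obtain ⟨g, hgf, Q, G, hG, hGμ, hper⟩ := exists_isWindowPeriodic_approx herg hPRP f hε k
    (η := 2⁻¹ ^ k / 4) (by simp)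
  refine ⟨g, Metric.mem_ball.mpr hgf, g, (((k : ℝ) + 1) ^ Q)⁻¹ / 2,
    by rw [dist_self]; positivity, G, hG, ?_, fun ω hω => ?_⟩
  · calc μ Gᶜ ≤ 4 * (2⁻¹ ^ k / 4) := hGμ.trans_eq (by ring)
      _ = 2⁻¹ ^ k := ENNReal.mul_div_cancel (by norm_num) (by norm_num)
  · obtain ⟨q, hkq, hqQ, hω⟩ := hper ω hω
    refine ⟨q, hkq, ?_, hω⟩
    rw [mul_div_cancel₀ _ two_ne_zero]
    exact inv_anti₀ (by positivity) (pow_le_pow_right₀ (by simp) hqQ)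

end Residual

end GordonMRP

/-- **Theorem 2 (metric version).** If the minimal homeomorphism `T` of the infinite
compact metric space `Ω` with ergodic measure `μ` satisfies (MRP), then for a residual
set of `f ∈ C(Ω, ℝ)` there is a full `μ`-measure Borel set of `ω ∈ Ω` such that
`n ↦ f (Tⁿ ω)` is a Gordon potential. -/
theorem generic_gordon_of_MRP {Ω : Type*} [MetricSpace Ω] [CompactSpace Ω] [Infinite Ω]
    [MeasurableSpace Ω] [BorelSpace Ω]
    (T : Ω ≃ₜ Ω)
    (hmin : ∀ ω : Ω, Dense (Set.range fun n : ℤ => (T.toEquiv ^ n) ω))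
    (μ : Measure Ω) [IsProbabilityMeasure μ] (herg : Ergodic (⇑T) μ)
    (hMRP : 0 < μ (PRP (⇑T))) :
    ∃ F ∈ residual C(Ω, ℝ), ∀ f ∈ F, ∃ Ωf : Set Ω, MeasurableSet Ωf ∧ μ Ωf = 1 ∧
      ∀ ω ∈ Ωf, IsGordonPotential fun n : ℤ => f ((T.toEquiv ^ n) ω) := by
  have hPRP := GordonMRP.measure_compl_PRP T herg hMRP
  have := GordonMRP.isOpenPosMeasure_of_minimal T herg.toMeasurePreserving hmin
  have := GordonMRP.nullSingletonClass_of_minimal T herg.toMeasurePreserving hmin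
  refine ⟨⋂ k, GordonMRP.gordonApprox T μ k, countable_iInter_mem.mpr fun k =>
    residual_of_dense_open (GordonMRP.isOpen_gordonApprox T μ k)
      (GordonMRP.dense_gordonApprox herg hPRP k), fun f hf => ?_⟩
  choose g c hfg G hG hGμ hper using Set.mem_iInter.mp hf
  have hsum : ∑' k, μ (G k)ᶜ ≠ ⊤ :=
    ne_top_of_le_ne_top (by simp [ENNReal.tsum_geometric]) (ENNReal.tsum_le_tsum hGμ)
  refine ⟨liminf G atTop, MeasurableSet.measurableSet_liminf hG,
    GordonMRP.measure_liminf_eq_one hG hsum, fun ω hω => ?_⟩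
  refine GordonMRP.isGordonPotential_of_eventually_isWindowPeriodic ?_
  filter_upwards [Filter.mem_liminf_iff_eventually_mem.mp hω] with k hk
  exact ⟨g k, c k, hfg k, hper k ω hk⟩
end

section
/- Let d ≥ 1 and let α ∈ 𝕋^d = (ℝ/ℤ)^d be such that the shift T : 𝕋^d → 𝕋^d, Tω = ω + α, is minimal (equivalently, the coordinates of α together with 1 are linearly independent over ℚ). Then (𝕋^d, T) satisfies the global repetition property (GRP): for every ω ∈ 𝕋^d, the sequence {T^k ω}_{k≥0} has the repetition property. -/
open Filter Topology MeasureTheory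

/-- By compactness, some positive multiple of `α` is within `ε` of `0`. -/
lemma exists_nsmul_close {d : ℕ} (α : Fin d → UnitAddCircle) {ε : ℝ} (hε : 0 < ε) :
    ∃ q : ℕ, 0 < q ∧ dist ((q : ℕ) • α) 0 < ε := by
  obtain ⟨x, -, φ, hφ, hx⟩ :=
    (isCompact_univ (X := Fin d → UnitAddCircle)).tendsto_subseq
      (x := fun n : ℕ => n • α) (fun n => Set.mem_univ _)
  have h := (Metric.tendsto_atTop.1 hx) (ε / 2) (half_pos hε)
  obtain ⟨N, hN⟩ := h
  have h1 := hN N le_rfl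
  have h2 := hN (N + 1) (Nat.le_succ N)
  have hlt : φ N < φ (N + 1) := hφ (Nat.lt_succ_self N)
  refine ⟨φ (N + 1) - φ N, Nat.sub_pos_of_lt hlt, ?_⟩
  have key : dist ((φ N : ℕ) • α) ((φ (N + 1) : ℕ) • α) < ε := by
    calc dist ((φ N : ℕ) • α) ((φ (N + 1) : ℕ) • α)
        ≤ dist ((φ N : ℕ) • α) x + dist ((φ (N + 1) : ℕ) • α) x := dist_triangle_right _ _ _
      _ < ε / 2 + ε / 2 := add_lt_add h1 h2
      _ = ε := add_halves ε
  have hsplit : (φ (N + 1) : ℕ) • α = (φ N : ℕ) • α + (φ (N + 1) - φ N) • α := by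
    rw [← add_nsmul, Nat.add_sub_cancel' hlt.le]
  rw [hsplit] at key
  rw [dist_comm]
  simpa [dist_self_add_right] using key

/-- **Theorem 3.** Every minimal shift `ω ↦ ω + α` on the torus `𝕋^d` satisfies the
global repetition property (GRP). -/
theorem minimal_torus_shift_GRP {d : ℕ} (hd : 1 ≤ d) (α : Fin d → UnitAddCircle)
    (hmin : ∀ ω : Fin d → UnitAddCircle, Dense (Set.range fun n : ℤ => ω + n • α)) :
    ∀ ω : Fin d → UnitAddCircle, ω ∈ PRP (fun x => x + α) := by
  intro ω ε hε r hr
  obtain ⟨q, hq, hqε⟩ := exists_nsmul_close α hε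
  refine ⟨q, hq, fun k _ => ?_⟩
  have hiter : ∀ m : ℕ, (fun x => x + α)^[m] ω = ω + m • α := by
    intro m
    induction m with
    | zero => simp
    | succ n ih => rw [Function.iterate_succ_apply', ih, succ_nsmul, add_assoc]
  simp only []
  rw [hiter, hiter, add_nsmul, ← add_assoc]
  simpa [dist_self_add_right] using hqε
end

section
/- Let Ω be a compact metric space and let T : Ω → Ω be a minimal homeomorphism that is an isometry (dist(Tx, Ty) = dist(x, y) for all x, y ∈ Ω). Then (Ω,T) satisfies the global repetition property: for every ω ∈ Ω, the sequence {T^k ω}_{k≥0} has the repetition property. -/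
open Filter Topology MeasureTheory

/-! An isometry `T` of a compact space returns uniformly: some two points `T^[n] ω` and
`T^[n + q] ω` of the orbit are `ε`-close, and since every iterate of `T` is an isometry,
`dist (T^[k] ω) (T^[k + q] ω) = dist ω (T^[q] ω) < ε` for *every* `k`, however large `r` is. -/

theorem Isometry.iterate {α : Type*} [PseudoEMetricSpace α] {f : α → α} (hf : Isometry f) :
    ∀ n : ℕ, Isometry f^[n]
  | 0 => isometry_id
  | n + 1 => (hf.iterate n).comp hf

theorem exists_lt_dist_lt_of_compactSpace {α : Type*} [PseudoMetricSpace α] [CompactSpace α]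
    (u : ℕ → α) {ε : ℝ} (hε : 0 < ε) : ∃ n m, n < m ∧ dist (u n) (u m) < ε := by
  obtain ⟨a, φ, hφ, hlim⟩ := CompactSpace.tendsto_subseq u
  obtain ⟨N, hN⟩ := Metric.cauchySeq_iff'.mp hlim.cauchySeq ε hε
  exact ⟨φ N, φ (N + 1), hφ N.lt_succ_self, by simpa [dist_comm] using hN (N + 1) N.le_succ⟩

theorem Isometry.exists_pos_forall_dist_iterate_add_lt {α : Type*} [PseudoMetricSpace α]
    [CompactSpace α] {f : α → α} (hf : Isometry f) (x : α) {ε : ℝ} (hε : 0 < ε) :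
    ∃ q, 0 < q ∧ ∀ k, dist (f^[k] x) (f^[k + q] x) < ε := by
  obtain ⟨n, m, hnm, hclose⟩ := exists_lt_dist_lt_of_compactSpace (f^[·] x) hε
  obtain ⟨q, rfl⟩ := Nat.exists_eq_add_of_lt hnm
  have hshift : ∀ k, dist (f^[k] x) (f^[k + (q + 1)] x) = dist x (f^[q + 1] x) := fun k => by
    rw [Function.iterate_add_apply, (hf.iterate k).dist_eq]
  refine ⟨q + 1, q.succ_pos, fun k => ?_⟩
  rw [hshift, ← hshift n]
  simpa [add_assoc] using hclose

theorem minimal_isometry_GRP_general {Ω : Type*} [MetricSpace Ω] [CompactSpace Ω]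
    (T : Ω ≃ₜ Ω)
    (hiso : ∀ x y : Ω, dist (T x) (T y) = dist x y) :
    ∀ ω : Ω, ω ∈ PRP (⇑T) := by
  intro ω ε hε r _
  obtain ⟨q, hq, hclose⟩ := (Isometry.of_dist_eq hiso).exists_pos_forall_dist_iterate_add_lt ω hε
  exact ⟨q, hq, fun k _ => hclose k⟩

/-- Every minimal isometry of a compact metric space satisfies the global repetition
property: every forward orbit has the repetition property. -/
theorem minimal_isometry_GRP {Ω : Type*} [MetricSpace Ω] [CompactSpace Ω]
    (T : Ω ≃ₜ Ω)
    (hiso : ∀ x y : Ω, dist (T x) (T y) = dist x y)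
    (hmin : ∀ ω : Ω, Dense (Set.range fun n : ℤ => (T.toEquiv ^ n) ω)) :
    ∀ ω : Ω, ω ∈ PRP (⇑T) :=
  minimal_isometry_GRP_general T hiso
end

section
/- Let α ∈ 𝕋 = ℝ/ℤ be irrational and not badly approximable, i.e., there is a sequence of positive integers q_k → ∞ with q_k·⟨α q_k⟩ → 0. Then for the skew-shift T(ω₁,ω₂) = (ω₁ + 2α, ω₁ + ω₂) on 𝕋², every point (ω₁,ω₂) ∈ 𝕋² has a forward orbit {T^k(ω₁,ω₂)}_{k≥0} with the repetition property; that is, (𝕋²,T) satisfies (GRP). -/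
open Filter Topology MeasureTheory

/-- The skew-shift `T (ω₁, ω₂) = (ω₁ + 2α, ω₁ + ω₂)` on the two-dimensional torus. -/
noncomputable def skewShift (α : UnitAddCircle) :
    UnitAddCircle × UnitAddCircle → UnitAddCircle × UnitAddCircle :=
  fun p => (p.1 + 2 • α, p.1 + p.2)

/-- `α ∈ 𝕋` is badly approximable if `⟨αq⟩ > c / q` for some `c > 0` and all `q ≠ 0`. -/
def BadlyApproximable (α : UnitAddCircle) : Prop :=
  ∃ c > (0 : ℝ), ∀ q : ℤ, q ≠ 0 → c / |(q : ℝ)| < ‖q • α‖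


/-! Iterating gives `T^k(ω₁, ω₂) = (ω₁ + 2kα, ω₂ + kω₁ + k(k-1)α)`, so advancing the time by `Q`
moves the point by `(2Qα, Qω₁ + Q(2k+Q-1)α)`. Pick `q` with `q⟨qα⟩` tiny and then, by Dirichlet's
theorem applied to `qω₁`, some `1 ≤ j ≤ M + 1` with `⟨jqω₁⟩ ≤ 1/(M+2)`. For the return time
`Q = jq` and all `k ≤ rQ` the displacement is at most `⟨jqω₁⟩ + 2(r+1)j² · q⟨qα⟩`, which is small
because `j` is bounded independently of `q`.
-/

lemma Nat.add_mul_add_sub_one (k Q : ℕ) :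
    (k + Q) * (k + Q - 1) = k * (k - 1) + Q * (2 * k + Q - 1) := by
  rcases k with _ | k <;> rcases Q with _ | Q <;> simp; ring

section skewShift

variable (α ω₁ ω₂ : UnitAddCircle)

lemma skewShift_iterate (k : ℕ) :
    (skewShift α)^[k] (ω₁, ω₂) = (ω₁ + (2 * k) • α, ω₂ + k • ω₁ + (k * (k - 1)) • α) := by
  induction k with
  | zero => simp
  | succ k ih =>
    rw [Function.iterate_succ_apply', ih, skewShift, Prod.mk.injEq,
      Nat.add_mul_add_sub_one k 1]
    constructor
    · rw [add_assoc, ← add_nsmul]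
      ring_nf
    · simp only [add_nsmul, one_nsmul, one_mul, Nat.add_sub_cancel]
      abel

lemma skewShift_iterate_add_sub_iterate (k Q : ℕ) :
    (skewShift α)^[k + Q] (ω₁, ω₂) - (skewShift α)^[k] (ω₁, ω₂)
      = (2 • Q • α, Q • ω₁ + (2 * k + Q - 1) • Q • α) := by
  simp only [skewShift_iterate, Nat.add_mul_add_sub_one, Prod.mk_sub_mk, ← mul_nsmul',
    mul_add, add_nsmul, mul_comm _ Q]
  ext <;> simp only <;> abel

lemma dist_skewShift_iterate_add_le (k Q : ℕ) :
    dist ((skewShift α)^[k] (ω₁, ω₂)) ((skewShift α)^[k + Q] (ω₁, ω₂))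
      ≤ ‖Q • ω₁‖ + 2 * (k + Q) * ‖Q • α‖ := by
  rcases Q.eq_zero_or_pos with rfl | hQ
  · simp
  have hQ' : (1 : ℝ) ≤ Q := by exact_mod_cast hQ
  have hsub : ((2 * k + Q - 1 : ℕ) : ℝ) ≤ 2 * k + Q := by
    rw [Nat.cast_sub (by omega)]
    push_cast
    linarith
  rw [dist_comm, dist_eq_norm, skewShift_iterate_add_sub_iterate, Prod.norm_def, max_le_iff]
  constructor
  · calc ‖2 • Q • α‖ ≤ 2 * ‖Q • α‖ := norm_nsmul_le (n := 2)
      _ ≤ 2 * (k + Q) * ‖Q • α‖ := by gcongr; linarith [(Nat.cast_nonneg k : (0 : ℝ) ≤ k)]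
      _ ≤ _ := le_add_of_nonneg_left (norm_nonneg _)
  · calc ‖Q • ω₁ + (2 * k + Q - 1) • Q • α‖ ≤ ‖Q • ω₁‖ + (2 * k + Q - 1 : ℕ) * ‖Q • α‖ :=
          (norm_add_le _ _).trans (by gcongr; exact norm_nsmul_le)
      _ ≤ ‖Q • ω₁‖ + 2 * (k + Q) * ‖Q • α‖ := by
          gcongr
          linarith

lemma dist_skewShift_iterate_add_mul_le {r : ℝ} (hr : 0 ≤ r) {k j q : ℕ}
    (hk : (k : ℝ) ≤ r * (j * q)) :
    dist ((skewShift α)^[k] (ω₁, ω₂)) ((skewShift α)^[k + j * q] (ω₁, ω₂))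
      ≤ ‖j • q • ω₁‖ + 2 * (r + 1) * j ^ 2 * (q * ‖q • α‖) := by
  calc _ ≤ ‖(j * q) • ω₁‖ + 2 * (k + (j * q : ℕ)) * ‖(j * q) • α‖ :=
        dist_skewShift_iterate_add_le α ω₁ ω₂ k (j * q)
    _ ≤ ‖j • q • ω₁‖ + 2 * ((r + 1) * (j * q)) * (j * ‖q • α‖) := by
        rw [mul_nsmul', mul_nsmul']
        gcongr
        · push_cast
          linarith
        · exact norm_nsmul_le
    _ = _ := by ring

end skewShift

theorem skewShift_GRP_of_not_badlyApproximable_general (α : UnitAddCircle)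
    (hna : ∃ q : ℕ → ℕ, (∀ k, 0 < q k) ∧ Tendsto q atTop atTop ∧
      Tendsto (fun k => (q k : ℝ) * ‖(q k : ℤ) • α‖) atTop (𝓝 0)) :
    ∀ p : UnitAddCircle × UnitAddCircle, p ∈ PRP (skewShift α) := by
  rintro ⟨ω₁, ω₂⟩ ε hε r hr
  obtain ⟨q, hq_pos, -, hq⟩ := hna
  obtain ⟨M, hM⟩ := exists_nat_one_div_lt (half_pos hε)
  set C : ℝ := 2 * (r + 1) * (M + 1) ^ 2
  have hC : 0 < C := by positivity
  obtain ⟨n, hn⟩ := (hq.eventually (gt_mem_nhds (by positivity : 0 < ε / 2 / C))).exists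
  simp only [natCast_zsmul] at hn
  obtain ⟨j, ⟨hj_pos, hjM⟩, hj⟩ := AddCircle.exists_norm_nsmul_le (q n • ω₁) M.succ_pos
  have hjω_small : ‖j • q n • ω₁‖ < ε / 2 := by
    refine hj.trans_lt (lt_of_le_of_lt ?_ hM)
    gcongr
    push_cast
    linarith
  have hjα_small : 2 * (r + 1) * j ^ 2 * (q n * ‖q n • α‖) < ε / 2 :=
    calc _ ≤ C * (q n * ‖q n • α‖) := by unfold C; gcongr; exact_mod_cast hjM
      _ < C * (ε / 2 / C) := mul_lt_mul_of_pos_left hn hC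
      _ = ε / 2 := mul_div_cancel₀ _ hC.ne'
  refine ⟨j * q n, Nat.mul_pos hj_pos (hq_pos n), fun k hk => ?_⟩
  have hkr : (k : ℝ) ≤ r * (j * q n) := by
    exact_mod_cast (Nat.cast_le.2 hk).trans (Nat.floor_le (by positivity))
  calc _ ≤ ‖j • q n • ω₁‖ + 2 * (r + 1) * j ^ 2 * (q n * ‖q n • α‖) :=
        dist_skewShift_iterate_add_mul_le α ω₁ ω₂ hr.le hkr
    _ < ε / 2 + ε / 2 := add_lt_add hjω_small hjα_small
    _ = ε := add_halves ε

/-- If `α` is irrational and not badly approximable (there are positive integers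
`q k → ∞` with `q k * ⟨α * q k⟩ → 0`), then the skew-shift on `𝕋²` satisfies (GRP). -/
theorem skewShift_GRP_of_not_badlyApproximable (α : UnitAddCircle)
    (hirr : ∀ n : ℤ, n ≠ 0 → n • α ≠ 0)
    (hna : ∃ q : ℕ → ℕ, (∀ k, 0 < q k) ∧ Tendsto q atTop atTop ∧
      Tendsto (fun k => (q k : ℝ) * ‖(q k : ℤ) • α‖) atTop (𝓝 0)) :
    ∀ p : UnitAddCircle × UnitAddCircle, p ∈ PRP (skewShift α) :=
  skewShift_GRP_of_not_badlyApproximable_general α hna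
end

section
/- Let α ∈ 𝕋 = ℝ/ℤ be irrational and let T(ω₁,ω₂) = (ω₁ + 2α, ω₁ + ω₂) be the skew-shift on 𝕋². If there exists a point (ω₁,ω₂) ∈ 𝕋² whose forward orbit {T^k(ω₁,ω₂)}_{k≥0} has the repetition property, then α is not badly approximable. -/
open Filter Topology MeasureTheory

/-- Every element of the unit circle has a lift realizing its norm. -/
lemma exists_lift_norm (g : UnitAddCircle) :
    ∃ t : ℝ, (t : UnitAddCircle) = g ∧ |t| = ‖g‖ := by
  obtain ⟨x, rfl⟩ : ∃ x : ℝ, (x : UnitAddCircle) = g := Quotient.exists_rep g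
  refine ⟨x - round x, ?_, ?_⟩
  · have h0 : ((round x : ℝ) : UnitAddCircle) = 0 := by
      rw [AddCircle.coe_eq_zero_iff]
      exact ⟨round x, by simp⟩
    have : ((x - round x : ℝ) : UnitAddCircle) = (x : UnitAddCircle) - (round x : ℝ) := rfl
    rw [this, h0, sub_zero]
  · rw [UnitAddCircle.norm_eq]

/-- If an arithmetic progression of reals stays within `ε < 1/4` of the integers
for `N+1` steps, with step of size `< 2ε`, then the total displacement is `< 2ε`. -/
lemma key_real (s t ε : ℝ) (N : ℕ) (hε : ε < 1/4) (ht : |t| < 2*ε)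
    (h : ∀ k : ℕ, k ≤ N → |s + k*t - round (s + k*t)| < ε) :
    |(N:ℝ)*t| < 2*ε := by
  have hround : ∀ k : ℕ, k ≤ N → round (s + k*t) = round s := by
    intro k hk
    induction k with
    | zero => simp
    | succ n ih =>
      have hn : n ≤ N := Nat.le_of_succ_le hk
      have h1 := h n hn
      have h2 := h (n+1) hk
      have ihn := ih hn
      push_cast at h1 h2 ⊢
      have hint : |(round (s + ((n:ℝ)+1)*t) : ℝ) - round s| < 1 := by
        have heq : (round (s + ((n:ℝ)+1)*t) : ℝ) - round s =
            -(s + ((n:ℝ)+1)*t - round (s + ((n:ℝ)+1)*t)) + t + (s + (n:ℝ)*t - round (s + (n:ℝ)*t)) := by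
          rw [ihn]; push_cast; ring
        rw [heq]
        have b1 := abs_add_le (-(s + ((n:ℝ)+1)*t - round (s + ((n:ℝ)+1)*t)) + t) (s + (n:ℝ)*t - round (s + (n:ℝ)*t))
        have b2 := abs_add_le (-(s + ((n:ℝ)+1)*t - round (s + ((n:ℝ)+1)*t))) t
        rw [abs_neg] at b2
        have : |(-(s + ((n:ℝ)+1)*t - round (s + ((n:ℝ)+1)*t)) + t)| < ε + 2*ε := by
          refine lt_of_le_of_lt b2 ?_; gcongr
        nlinarith [h1, ht]
      have hcast : |((round (s + ((n:ℝ)+1)*t) - round s : ℤ) : ℝ)| < 1 := by push_cast; exact hint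
      have hZ : |round (s + ((n:ℝ)+1)*t) - round s| < 1 := by exact_mod_cast hcast
      have := abs_lt.mp hZ
      omega
  have h0 := h 0 (Nat.zero_le N)
  have hN := h N le_rfl
  rw [hround N le_rfl] at hN
  simp only [Nat.cast_zero, zero_mul, add_zero] at h0
  have : (N:ℝ)*t = (s + N*t - round s) - (s - round s) := by ring
  rw [this]
  calc |(s + N*t - round s) - (s - round s)| ≤ |s + N*t - round s| + |s - round s| :=
        abs_sub _ _
    _ < ε + ε := by gcongr
    _ = 2*ε := by ring

lemma skewShift_fst (α : UnitAddCircle) (ω : UnitAddCircle × UnitAddCircle) (k : ℕ) :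
    ((skewShift α)^[k] ω).1 = ω.1 + k • (2 • α) := by
  induction k with
  | zero => simp
  | succ n ih =>
    rw [Function.iterate_succ_apply', skewShift]
    simp only [ih, succ_nsmul]
    abel

/-- If some point of `𝕋²` has a forward orbit with the repetition property for the
skew-shift generated by an irrational `α`, then `α` is not badly approximable. -/
theorem not_badlyApproximable_of_skewShift_TRP (α : UnitAddCircle)
    (hirr : ∀ n : ℤ, n ≠ 0 → n • α ≠ 0)
    (hTRP : (PRP (skewShift α)).Nonempty) :
    ¬ BadlyApproximable α := by
  rintro ⟨c, hc, hbad⟩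
  obtain ⟨ω, hω⟩ := hTRP
  set ε : ℝ := min (c/8) (1/8) with hεdef
  have hεpos : 0 < ε := lt_min (by linarith) (by norm_num)
  have hεlt : ε < 1/4 := lt_of_le_of_lt (min_le_right _ _) (by norm_num)
  have hεc : ε ≤ c/8 := min_le_left _ _
  obtain ⟨q, hqpos, hclose⟩ := hω ε hεpos 1 one_pos
  set u : ℕ → UnitAddCircle × UnitAddCircle := fun k => (skewShift α)^[k] ω with hu
  have hfloor : ⌊(1:ℝ) * q⌋₊ = q := by simp
  -- second coordinate differences
  set g : UnitAddCircle := q • (2 • α) with hg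
  set v : ℕ → UnitAddCircle := fun k => (u (k+q)).2 - (u k).2 with hv
  have hvstep : ∀ k : ℕ, v (k+1) = v k + g := by
    intro k
    have e1 : u (k+1) = skewShift α (u k) := Function.iterate_succ_apply' _ _ _
    have e2 : u (k+1+q) = skewShift α (u (k+q)) := by
      have : k+1+q = (k+q)+1 := by ring
      rw [this]; exact Function.iterate_succ_apply' _ _ _
    simp only [hv, e1, e2, skewShift]
    have f1 : (u (k+q)).1 = ω.1 + (k+q) • (2 • α) := skewShift_fst α ω (k+q)
    have f2 : (u k).1 = ω.1 + k • (2 • α) := skewShift_fst α ω k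
    rw [f1, f2, add_nsmul, hg]
    abel
  have hvk : ∀ k : ℕ, v k = v 0 + k • g := by
    intro k
    induction k with
    | zero => simp
    | succ n ih => rw [hvstep n, ih, succ_nsmul]; abel
  have hvnorm : ∀ k : ℕ, k ≤ q → ‖v k‖ < ε := by
    intro k hk
    have := hclose k (by rw [hfloor]; exact hk)
    rw [Prod.dist_eq] at this
    have h2 : dist ((u k).2) ((u (k+q)).2) < ε := lt_of_le_of_lt le_sup_right this
    rw [dist_eq_norm] at h2
    rw [hv]
    simpa [norm_sub_rev] using h2
  -- lifts
  obtain ⟨s, hs, hsnorm⟩ := exists_lift_norm (v 0)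
  obtain ⟨t, htc, htnorm⟩ := exists_lift_norm g
  have hgt : ‖g‖ < 2*ε := by
    have h0 := hvnorm 0 (Nat.zero_le q)
    have h1 := hvnorm 1 hqpos
    have : g = v 1 - v 0 := by rw [hvk 1]; simp
    rw [this]
    calc ‖v 1 - v 0‖ ≤ ‖v 1‖ + ‖v 0‖ := norm_sub_le _ _
      _ < ε + ε := by gcongr
      _ = 2*ε := by ring
  have ht2 : |t| < 2*ε := htnorm ▸ hgt
  -- v k = ↑(s + k*t)
  have hvcoe : ∀ k : ℕ, v k = ((s + k*t : ℝ) : UnitAddCircle) := by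
    intro k
    have hsmul : ∀ m : ℕ, ((m*t : ℝ) : UnitAddCircle) = m • g := by
      intro m
      induction m with
      | zero => simp
      | succ n ih =>
        have : ((n+1)*t : ℝ) = n*t + t := by ring
        push_cast
        rw [this]
        have hadd : ((n*t + t : ℝ) : UnitAddCircle) = ((n*t : ℝ) : UnitAddCircle) + t := rfl
        rw [hadd, ih, htc, succ_nsmul]
    have hadd : ((s + k*t : ℝ) : UnitAddCircle) = (s : UnitAddCircle) + ((k*t : ℝ)) := rfl
    rw [hvk k, hadd, hs, hsmul k]
  have hreal : ∀ k : ℕ, k ≤ q → |s + k*t - round (s + k*t)| < ε := by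
    intro k hk
    have := hvnorm k hk
    rw [hvcoe k, UnitAddCircle.norm_eq] at this
    exact this
  have hkey := key_real s t ε q hεlt ht2 hreal
  -- badly approximable contradiction
  have h2q : (2*q : ℤ) ≠ 0 := by positivity
  have hbad2 := hbad (2*q) h2q
  have hgz : ((2*q : ℤ)) • α = g := by
    rw [hg, smul_smul]
    have : ((2*q : ℤ)) • α = ((2*q : ℕ) : ℤ) • α := by push_cast; ring_nf
    rw [this, natCast_zsmul]
    norm_num [mul_comm]
  rw [hgz, ← htnorm] at hbad2
  have hqR : (0:ℝ) < q := by exact_mod_cast hqpos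
  have habs2q : |((2*q : ℤ) : ℝ)| = 2*q := by
    rw [abs_of_pos (by positivity)]; push_cast; ring
  rw [habs2q] at hbad2
  -- c/(2q) < |t| and q*|t| < 2ε
  have hqt : (q:ℝ) * |t| < 2*ε := by
    calc (q:ℝ) * |t| = |(q:ℝ)*t| := by rw [abs_mul, abs_of_pos hqR]
      _ < 2*ε := hkey
  have hstep : (q:ℝ) * (c/(2*q)) < (q:ℝ) * |t| := by
    exact mul_lt_mul_of_pos_left hbad2 hqR
  have hc2 : (q:ℝ) * (c/(2*q)) = c/2 := by field_simp
  rw [hc2] at hstep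
  linarith
end

section
/- Let Ω be a compact metric space and T : Ω → Ω a minimal homeomorphism. If PRP(Ω,T) is nonempty, then PRP(Ω,T) is residual in Ω (it contains a countable intersection of dense open subsets of Ω). -/
open Filter Topology MeasureTheory

/-!
The repetition property of `ω` is a countable conjunction of conditions, each of which is
witnessed by finitely many iterates and hence is open, so `PRP T` is a `Gδ` set for continuous
`T`. Uniformly continuous maps commuting with `T` preserve `PRP T`; on a compact space this
applies to every power of the homeomorphism `T`, so `PRP T` contains a full orbit, which is
dense by minimality. A dense `Gδ` set is residual.
-/

section RepetitionProperty

variable {Ω Ω' : Type*} [PseudoMetricSpace Ω] [PseudoMetricSpace Ω']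

theorem RepetitionProperty.comp_uniformContinuous {u : ℕ → Ω} (hu : RepetitionProperty u)
    {g : Ω → Ω'} (hg : UniformContinuous g) : RepetitionProperty (g ∘ u) := by
  intro ε hε r hr
  obtain ⟨δ, hδ, hδε⟩ := Metric.uniformContinuous_iff.mp hg ε hε
  obtain ⟨q, hq, hrep⟩ := hu δ hδ r hr
  exact ⟨q, hq, fun k hk => hδε (hrep k hk)⟩

theorem map_mem_PRP {T g : Ω → Ω} (hg : UniformContinuous g) (hgT : Function.Commute g T)
    {ω : Ω} (hω : ω ∈ PRP T) : g ω ∈ PRP T := by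
  have horbit : (fun k => T^[k] (g ω)) = g ∘ fun k => T^[k] ω :=
    funext fun k => (hgT.iterate_right k ω).symm
  change RepetitionProperty _
  rw [horbit]
  exact hω.comp_uniformContinuous hg

def repetitionSet (T : Ω → Ω) (ε r : ℝ) : Set Ω :=
  {ω | ∃ q : ℕ, 0 < q ∧ ∀ k : ℕ, k ≤ ⌊r * q⌋₊ → dist (T^[k] ω) (T^[k + q] ω) < ε}

variable {T : Ω → Ω}

theorem repetitionSet_mono {ε ε' r r' : ℝ} (hε : ε ≤ ε') (hr : r' ≤ r) :
    repetitionSet T ε r ⊆ repetitionSet T ε' r' := by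
  rintro ω ⟨q, hq, hrep⟩
  have hfloor : ⌊r' * q⌋₊ ≤ ⌊r * q⌋₊ := Nat.floor_le_floor (by gcongr)
  exact ⟨q, hq, fun k hk => (hrep k (hk.trans hfloor)).trans_le hε⟩

theorem PRP_eq_iInter_repetitionSet :
    PRP T = ⋂ n : ℕ, repetitionSet T (1 / (n + 1)) (n + 1) := by
  ext ω
  simp only [Set.mem_iInter]
  refine ⟨fun hω n => hω _ (by positivity) _ (by positivity), fun hω ε hε r hr => ?_⟩
  obtain ⟨n₁, hn₁⟩ := exists_nat_one_div_lt hε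
  obtain ⟨n₂, hn₂⟩ := exists_nat_gt r
  have hε' : 1 / ((max n₁ n₂ : ℕ) + 1 : ℝ) ≤ ε :=
    le_trans (by gcongr; exact_mod_cast le_max_left n₁ n₂) hn₁.le
  have hr' : r ≤ (max n₁ n₂ : ℕ) + 1 :=
    le_trans hn₂.le (by norm_cast; omega)
  exact repetitionSet_mono hε' hr' (hω (max n₁ n₂))

theorem isOpen_repetitionSet (hT : Continuous T) (ε r : ℝ) : IsOpen (repetitionSet T ε r) := by
  refine isOpen_iff_mem_nhds.mpr fun ω ⟨q, hq, hrep⟩ => ?_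
  have hnear : ∀ᶠ ω' in 𝓝 ω, ∀ k ∈ Set.Iic ⌊r * q⌋₊, dist (T^[k] ω') (T^[k + q] ω') < ε :=
    (eventually_all_finite (Set.finite_Iic _)).mpr fun k hk =>
      (isOpen_lt ((hT.iterate k).dist (hT.iterate (k + q))) continuous_const).mem_nhds
        (hrep k hk)
  exact hnear.mono fun ω' h => ⟨q, hq, h⟩

theorem isGδ_PRP (hT : Continuous T) : IsGδ (PRP T) := by
  rw [PRP_eq_iInter_repetitionSet]
  exact .iInter_of_isOpen fun n => isOpen_repetitionSet hT _ _

end RepetitionProperty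

theorem zpow_mem_PRP {Ω : Type*} [PseudoMetricSpace Ω] [CompactSpace Ω] (T : Ω ≃ₜ Ω) (n : ℤ)
    {ω : Ω} (hω : ω ∈ PRP T) : (T ^ n) ω ∈ PRP T :=
  map_mem_PRP (CompactSpace.uniformContinuous_of_continuous (T ^ n).continuous)
    (fun x => by simpa using DFunLike.congr_fun ((Commute.refl T).zpow_left n) x) hω

/-- For a minimal homeomorphism `T` of a compact metric space, if `PRP (Ω, T)` is
nonempty then it is residual. -/
theorem PRP_residual_of_nonempty {Ω : Type*} [MetricSpace Ω] [CompactSpace Ω]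
    (T : Ω ≃ₜ Ω)
    (hmin : ∀ ω : Ω, Dense (Set.range fun n : ℤ => (T.toEquiv ^ n) ω))
    (hne : (PRP (⇑T)).Nonempty) :
    PRP (⇑T) ∈ residual Ω := by
  obtain ⟨ω₀, hω₀⟩ := hne
  have horbit : Set.range (fun n : ℤ => (T.toEquiv ^ n) ω₀) ⊆ PRP T := by
    rintro _ ⟨n, rfl⟩
    simpa only [Homeomorph.coe_toEquiv_zpow] using zpow_mem_PRP T n hω₀
  exact residual_of_dense_Gδ (isGδ_PRP T.continuous) ((hmin ω₀).mono horbit)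
end

section
/- Let Ω be a compact metric space and T : Ω → Ω a homeomorphism (not necessarily minimal). Then PRP(Ω,T), the set of points whose forward orbit has the repetition property, is a Gδ subset of Ω (a countable intersection of open sets). -/
open Filter Topology MeasureTheory

/-!
A shift `q` that works for `(ε, r)` also works for every larger `ε` and smaller `r`, so the
repetition property only needs to be tested along the countable family `(1/(n+1), n)`. For each
such pair, the points admitting a good shift form a union over `q` of finitely many strict
inequalities between continuous functions `dist (T^[k] ω) (T^[k+q] ω)` and constants, an open set.
-/

section RepetitionProperty

variable {Ω : Type*} [PseudoMetricSpace Ω]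

def HasRepetition (u : ℕ → Ω) (ε r : ℝ) : Prop :=
  ∃ q : ℕ, 0 < q ∧ ∀ k : ℕ, k ≤ ⌊r * q⌋₊ → dist (u k) (u (k + q)) < ε

theorem HasRepetition.mono {u : ℕ → Ω} {ε ε' r r' : ℝ} (h : HasRepetition u ε r)
    (hε : ε ≤ ε') (hr : r' ≤ r) : HasRepetition u ε' r' := by
  obtain ⟨q, hq, hdist⟩ := h
  refine ⟨q, hq, fun k hk => (hdist k (hk.trans ?_)).trans_le hε⟩
  exact Nat.floor_le_floor (mul_le_mul_of_nonneg_right hr q.cast_nonneg)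

theorem repetitionProperty_iff_forall_nat {u : ℕ → Ω} :
    RepetitionProperty u ↔ ∀ n : ℕ, HasRepetition u ((n : ℝ) + 1)⁻¹ n := by
  constructor
  · intro h n
    obtain ⟨q, hq, hdist⟩ := h ((n : ℝ) + 1)⁻¹ (by positivity) ((n : ℝ) + 1) (by positivity)
    exact HasRepetition.mono ⟨q, hq, hdist⟩ le_rfl (by linarith)
  · intro h ε hε r _
    obtain ⟨n, hn⟩ := exists_nat_gt (max ε⁻¹ r)
    refine (h n).mono ?_ ((le_max_right _ _).trans hn.le)
    exact inv_le_of_inv_le₀ hε (((le_max_left _ _).trans hn.le).trans (by linarith))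

variable {X : Type*} [TopologicalSpace X] {u : ℕ → X → Ω}

theorem isOpen_setOf_hasRepetition (hu : ∀ k, Continuous (u k)) (ε r : ℝ) :
    IsOpen {x | HasRepetition (fun k => u k x) ε r} := by
  have hset : {x | HasRepetition (fun k => u k x) ε r} =
      ⋃ (q : ℕ) (_ : 0 < q), ⋂ k ∈ Set.Iic ⌊r * q⌋₊, {x | dist (u k x) (u (k + q) x) < ε} := by
    ext x
    simp [HasRepetition]
  rw [hset]
  exact isOpen_biUnion fun q _ => (Set.finite_Iic _).isOpen_biInter fun k _ =>
    isOpen_lt ((hu k).dist (hu (k + q))) continuous_const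

theorem isGδ_setOf_repetitionProperty (hu : ∀ k, Continuous (u k)) :
    IsGδ {x | RepetitionProperty fun k => u k x} := by
  simp only [repetitionProperty_iff_forall_nat, Set.ofPred_forall]
  exact IsGδ.iInter_of_isOpen fun n => isOpen_setOf_hasRepetition hu _ _

end RepetitionProperty

theorem PRP_isGδ_general {Ω : Type*} [MetricSpace Ω] (T : Ω ≃ₜ Ω) :
    IsGδ (PRP (⇑T)) :=
  isGδ_setOf_repetitionProperty fun k => T.continuous.iterate k

/-- For any homeomorphism `T` of a compact metric space, `PRP (Ω, T)` is a `Gδ` set. -/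
theorem PRP_isGδ {Ω : Type*} [MetricSpace Ω] [CompactSpace Ω] (T : Ω ≃ₜ Ω) :
    IsGδ (PRP (⇑T)) :=
  PRP_isGδ_general T
end

section
/- Let A be a finite set with at least two elements, let A^ℤ carry the product topology (a compact metrizable space), and let T : A^ℤ → A^ℤ be the shift (Tx)(n) = x(n+1). Let Ω ⊆ A^ℤ be a nonempty closed T-invariant subset (a subshift) containing at least one point that is not T-periodic. Then (Ω,T) does not satisfy (GRP): there exists ω ∈ Ω whose forward orbit sequence {T^k ω}_{k≥0} does not have the repetition property. -/
open Filter Topology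

/-- The left shift on the full shift space `A^ℤ`. -/
def shiftMap {A : Type*} : (ℤ → A) → (ℤ → A) := fun x n => x (n + 1)

/-!
If a point `ω` has, for every `q > 0`, a defect `ω k ≠ ω (k + q)` with `k ≤ r q`, its forward
orbit cannot have the repetition property: points with different `0`-th coordinates are
uniformly far apart in any compatible metric, by compactness.

Such a point exists in `Ω`. Otherwise, by compactness again, there is a bound `Q` such that
every point of `Ω` has a local period `q ≤ Q`, i.e. `ω k = ω (k + q)` for `k ≤ 2 q`. Along the
forward orbit of the non-periodic point `x`, the Fine–Wilf theorem shows that the minimal local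
period cannot decrease when one jumps ahead by it; hence from a position where it is maximal,
equal to `t`, it stays `t` forever and `x` is eventually `t`-periodic. Translating `x` to its
last position `n₀` with `x n₀ ≠ x (n₀ + t)` gives a point whose defects for every `q` occur
within distance `t` of the origin.
-/

section Periods

variable {α : Type*}

def IsLocalPeriod (r : ℕ) (u : ℕ → α) (n q : ℕ) : Prop :=
  ∀ a, n ≤ a → a ≤ n + r * q → u a = u (a + q)

def HasPeriodOn (u : ℕ → α) (m L p : ℕ) : Prop :=
  ∀ a, m ≤ a → a + p < m + L → u a = u (a + p)

theorem hasPeriod_map_range_iff {u : ℕ → α} {m L p : ℕ} :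
    ((List.range L).map fun i => u (m + i)).HasPeriod p ↔ HasPeriodOn u m L p := by
  rw [List.hasPeriod_iff_getElem?, List.length_map, List.length_range]
  constructor
  · intro h a hma hap
    obtain ⟨i, rfl⟩ := Nat.exists_eq_add_of_le hma
    simpa [List.getElem?_range (by omega : i < L), List.getElem?_range (by omega : i + p < L),
      add_assoc] using h i (by omega)
  · intro h i hi
    simpa [List.getElem?_range (by omega : i < L), List.getElem?_range (by omega : i + p < L),
      add_assoc] using h (m + i) (by omega) (by omega)

theorem HasPeriodOn.gcd {u : ℕ → α} {m L p s : ℕ} (hp : HasPeriodOn u m L p)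
    (hs : HasPeriodOn u m L s) (hL : p + s - p.gcd s ≤ L) : HasPeriodOn u m L (p.gcd s) := by
  rw [← hasPeriod_map_range_iff] at hp hs ⊢
  exact hp.gcd hs (by simpa using hL)

theorem IsLocalPeriod.of_isLocalPeriod_add {r : ℕ} {u : ℕ → α} {n p g : ℕ}
    (hp : IsLocalPeriod r u n p) (hg : IsLocalPeriod r u (n + p) g) (hgp : r * g + g ≤ r * p) :
    IsLocalPeriod r u n g := by
  intro a hna ha
  calc u a = u (a + p) := hp a hna (by omega)
    _ = u (a + p + g) := hg (a + p) (by omega) (by omega)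
    _ = u (a + g + p) := by rw [add_right_comm]
    _ = u (a + g) := (hp (a + g) (by omega) (by omega)).symm

theorem IsLocalPeriod.le_of_isLocalPeriod_add {r : ℕ} {u : ℕ → α} {n p s : ℕ} (hr : 2 ≤ r)
    (hp : IsLocalPeriod r u n p) (hmin : ∀ q, 0 < q → IsLocalPeriod r u n q → p ≤ q)
    (hs : IsLocalPeriod r u (n + p) s) (hs0 : 0 < s) : p ≤ s := by
  by_contra! hsp
  obtain ⟨g, hg0, hgs, hg, hgp⟩ :
      ∃ g, 0 < g ∧ g ≤ s ∧ IsLocalPeriod r u (n + p) g ∧ r * g + g ≤ r * p := by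
    rcases le_or_gt (r * s + s) (r * p) with hsmall | hlarge
    · exact ⟨s, hs0, le_rfl, hs, hsmall⟩
    -- Fine–Wilf on the block `[n + p, n + p + r p]`, where both `p` and `s` are periods.
    have hrp : 2 * p ≤ r * p := Nat.mul_le_mul_right p hr
    have hPp : HasPeriodOn u (n + p) (r * p + 1) p := fun a ha hap => hp a (by omega) (by omega)
    have hPs : HasPeriodOn u (n + p) (r * p + 1) s := fun a ha has => hs a ha (by omega)
    have hPg := hPp.gcd hPs (by omega)
    set g := p.gcd s
    have hg0 : 0 < g := Nat.gcd_pos_of_pos_right p hs0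
    have hgs : g ≤ s := Nat.le_of_dvd hs0 (Nat.gcd_dvd_right p s)
    have h2g : 2 * g ≤ p := by
      obtain ⟨c, hc⟩ := Nat.gcd_dvd_left p s
      rcases c with _ | _ | c <;> [omega; omega; nlinarith]
    have hgp : r * g + g ≤ r * p := by nlinarith
    exact ⟨g, hg0, hgs, fun a ha hag => hPg a ha (by nlinarith), hgp⟩
  exact (hmin g hg0 (hp.of_isLocalPeriod_add hg hgp)).not_gt (by omega)

theorem exists_eventually_periodic_of_isLocalPeriod_le {r Q : ℕ} {u : ℕ → α} (hr : 2 ≤ r)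
    (h : ∀ n, ∃ q, 0 < q ∧ q ≤ Q ∧ IsLocalPeriod r u n q) :
    ∃ t, 0 < t ∧ ∃ N, ∀ i, N ≤ i → u (i + t) = u i := by
  classical
  have hex (n : ℕ) : ∃ q, 0 < q ∧ IsLocalPeriod r u n q :=
    (h n).imp fun _ hq => ⟨hq.1, hq.2.2⟩
  let π n := Nat.find (hex n)
  have hπ (n : ℕ) : 0 < π n ∧ IsLocalPeriod r u n (π n) := Nat.find_spec (hex n)
  have hπmin (n q : ℕ) (hq : 0 < q) (hlp : IsLocalPeriod r u n q) : π n ≤ q :=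
    Nat.find_min' (hex n) ⟨hq, hlp⟩
  have hπjump (n : ℕ) : π n ≤ π (n + π n) :=
    (hπ n).2.le_of_isLocalPeriod_add hr (hπmin n) (hπ _).2 (hπ _).1
  have hbdd : BddAbove (Set.range π) := ⟨Q, by
    rintro _ ⟨n, rfl⟩
    obtain ⟨q, hq, hqQ, hlp⟩ := h n
    exact (hπmin n q hq hlp).trans hqQ⟩
  obtain ⟨n₁, hn₁⟩ := Nat.sSup_mem (Set.range_nonempty π) hbdd
  set t := π n₁
  have hmax (n : ℕ) : π n ≤ t := hn₁ ▸ le_csSup hbdd ⟨n, rfl⟩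
  have hconst (j : ℕ) : π (n₁ + j * t) = t := by
    induction j with
    | zero => simp [t]
    | succ j ih =>
      refine le_antisymm (hmax _) ?_
      have := hπjump (n₁ + j * t)
      rwa [ih, add_assoc, ← add_one_mul] at this
  have ht := (hπ n₁).1
  refine ⟨t, ht, n₁, fun i hi => ?_⟩
  obtain ⟨j, c, hc, rfl⟩ : ∃ j c, c < t ∧ i = n₁ + j * t + c :=
    ⟨(i - n₁) / t, (i - n₁) % t, Nat.mod_lt _ ht, by have := Nat.div_add_mod' (i - n₁) t; omega⟩
  have hlp := (hπ (n₁ + j * t)).2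
  rw [hconst] at hlp
  exact (hlp _ (by omega) (by nlinarith)).symm

theorem not_isLocalPeriod_of_periodic_succ {u : ℕ → α} {t q : ℕ}
    (ht : Function.Periodic (fun k => u (k + 1)) t) (hu : u t ≠ u 0) (hq : 0 < q) :
    ¬ IsLocalPeriod t u 0 q := by
  intro hlp
  obtain ⟨t, rfl⟩ : ∃ t', t = t' + 1 := ⟨t - 1, by rcases t with _ | t <;> simp_all⟩
  obtain ⟨q, rfl⟩ : ∃ q', q = q' + 1 := ⟨q - 1, by omega⟩
  have hshift : Function.Periodic (fun k => u (k + (q + 1) + 1)) (t + 1) := fun k => by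
    simpa only [add_right_comm k] using ht (k + (q + 1))
  -- `k ↦ u (k + 1)` and its translate by `q + 1` are `(t + 1)`-periodic and agree on a period
  have hq' : Function.Periodic (fun k => u (k + 1)) (q + 1) := fun k => by
    show u (k + (q + 1) + 1) = u (k + 1)
    rw [← hshift.map_mod_nat k, ← ht.map_mod_nat k]
    have hc := Nat.mod_lt k t.succ_pos
    exact ((hlp _ (Nat.zero_le _) (by nlinarith)).trans (congrArg u (by omega))).symm
  apply hu
  calc u (t + 1) = u (t + (q + 1) + 1) := (hq' t).symm
    _ = u (q + (t + 1) + 1) := by congr 1; omega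
    _ = u (q + 1) := ht q
    _ = u 0 := by simpa using (hlp 0 le_rfl (Nat.zero_le _)).symm

end Periods

section Shift

variable {A : Type*}

theorem shiftMap_iterate_apply (x : ℤ → A) (k : ℕ) (i : ℤ) : shiftMap^[k] x i = x (i + k) := by
  induction k generalizing x with
  | zero => simp
  | succ k ih =>
    rw [Function.iterate_succ_apply, ih]
    simp only [shiftMap, Nat.cast_succ]
    ring_nf

theorem shiftMap_injective : Function.Injective (shiftMap : (ℤ → A) → ℤ → A) := fun x y h => by
  funext i
  simpa [shiftMap] using congrFun h (i - 1)

theorem translate_mem {Ω : Set (ℤ → A)} (hinv : shiftMap '' Ω = Ω) {x : ℤ → A} (hx : x ∈ Ω)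
    (n : ℤ) : (fun i => x (i + n)) ∈ Ω := by
  have hmem (y : ℤ → A) : shiftMap y ∈ Ω ↔ y ∈ Ω := by
    rw [← shiftMap_injective.mem_set_image (a := y), hinv]
  induction n using Int.induction_on with
  | zero => simpa using hx
  | succ n ih =>
    rw [← hmem] at ih
    convert ih using 2
    simp only [shiftMap]
    ring_nf
  | pred n ih =>
    rw [← hmem]
    convert ih using 2
    simp only [shiftMap]
    ring_nf

theorem exists_periodic_tail {x : ℤ → A} {t : ℕ} {N : ℤ} (hN : ∀ i, N ≤ i → x (i + t) = x i)
    (hx : ∃ j, x (j + t) ≠ x j) :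
    ∃ n₀ : ℤ, Function.Periodic (fun k : ℕ => x (↑(k + 1) + n₀)) t ∧
      x (↑t + n₀) ≠ x (↑(0 : ℕ) + n₀) := by
  obtain ⟨n₀, hn₀, hmax⟩ := Int.exists_greatest_of_bdd
    ⟨N, fun j hj => not_lt.mp fun hNj => hj (hN j hNj.le)⟩ hx
  refine ⟨n₀, fun k => ?_, by simpa [add_comm] using hn₀⟩
  by_contra hne
  have := hmax (k + 1 + n₀) (by push_cast at hne ⊢; convert hne using 2; ring)
  omega

end Shift

theorem exists_pos_forall_dist_lt_imp_eq {X A : Type*} [PseudoMetricSpace X] [CompactSpace X]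
    [TopologicalSpace A] [DiscreteTopology A] {f : X → A} (hf : Continuous f) :
    ∃ δ > 0, ∀ x y, dist x y < δ → f x = f y := by
  obtain ⟨δ, hδ, hball⟩ := lebesgue_number_lemma_of_metric isCompact_univ
    (fun a => (isOpen_discrete {a}).preimage hf) (fun x _ => Set.mem_iUnion.2 ⟨f x, rfl⟩)
  refine ⟨δ, hδ, fun x y hxy => ?_⟩
  obtain ⟨a, ha⟩ := hball x (Set.mem_univ x)
  rw [ha (Metric.mem_ball_self hδ), ha (Metric.mem_ball.2 ((dist_comm y x).trans_lt hxy))]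

theorem not_repetitionProperty_of_forall_not_isLocalPeriod {X A : Type*} [PseudoMetricSpace X]
    [CompactSpace X] [TopologicalSpace A] [DiscreteTopology A] {f : X → A} (hf : Continuous f)
    {u : ℕ → X} {r : ℕ} (h : ∀ q, 0 < q → ¬ IsLocalPeriod r (fun k => f (u k)) 0 q) :
    ¬ RepetitionProperty u := by
  intro hRP
  obtain ⟨δ, hδ, hsep⟩ := exists_pos_forall_dist_lt_imp_eq hf
  obtain ⟨q, hq, hclose⟩ := hRP δ hδ (r + 1) (by positivity)
  refine h q hq fun k _ hk => hsep _ _ (hclose k (Nat.le_floor ?_))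
  have hk' : (k : ℝ) ≤ r * q := by exact_mod_cast (zero_add (r * q)) ▸ hk
  nlinarith

section Subshift

variable {A : Type*} [TopologicalSpace A] [DiscreteTopology A]

theorem isOpen_setOf_isLocalPeriod (r q : ℕ) :
    IsOpen {ω : ℤ → A | IsLocalPeriod r (fun k : ℕ => ω k) 0 q} := by
  have : {ω : ℤ → A | IsLocalPeriod r (fun k : ℕ => ω k) 0 q} =
      ⋂ a ∈ Set.Iic (r * q), {ω | ω a = ω ↑(a + q)} := by
    ext
    simp [IsLocalPeriod]
  rw [this]
  exact (Set.finite_Iic _).isOpen_biInter fun a _ =>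
    (isOpen_discrete {p : A × A | p.1 = p.2}).preimage
      (f := fun ω : ℤ → A => (ω a, ω ↑(a + q))) (by fun_prop)

theorem exists_bound_of_forall_exists_isLocalPeriod [Finite A] {Ω : Set (ℤ → A)}
    (hΩ : IsClosed Ω) {r : ℕ} (h : ∀ ω ∈ Ω, ∃ q, 0 < q ∧ IsLocalPeriod r (fun k : ℕ => ω k) 0 q) :
    ∃ Q, ∀ ω ∈ Ω, ∃ q, 0 < q ∧ q ≤ Q ∧ IsLocalPeriod r (fun k : ℕ => ω k) 0 q := by
  let U (Q : ℕ) : Set (ℤ → A) :=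
    {ω | ∃ q, 0 < q ∧ q ≤ Q ∧ IsLocalPeriod r (fun k : ℕ => ω k) 0 q}
  have hUopen (Q : ℕ) : IsOpen (U Q) := by
    have : U Q = ⋃ q ∈ Set.Ioc 0 Q, {ω | IsLocalPeriod r (fun k : ℕ => ω k) 0 q} := by
      ext
      simp [U, and_assoc]
    rw [this]
    exact isOpen_biUnion fun q _ => isOpen_setOf_isLocalPeriod r q
  have hUmono : Monotone U := fun Q Q' hQ ω ⟨q, hq, hqQ, hlp⟩ => ⟨q, hq, hqQ.trans hQ, hlp⟩
  exact hΩ.isCompact.elim_directed_cover U hUopen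
    (fun ω hω => let ⟨q, hq, hlp⟩ := h ω hω; Set.mem_iUnion.2 ⟨q, q, hq, le_rfl, hlp⟩)
    hUmono.directed_le

theorem exists_mem_forall_not_isLocalPeriod [Finite A] {Ω : Set (ℤ → A)} (hclosed : IsClosed Ω)
    (hinv : shiftMap '' Ω = Ω) {x : ℤ → A} (hx : x ∈ Ω)
    (hxap : ∀ p : ℕ, 0 < p → shiftMap^[p] x ≠ x) :
    ∃ ω ∈ Ω, ∃ r, ∀ q, 0 < q → ¬ IsLocalPeriod r (fun k : ℕ => ω k) 0 q := by
  by_contra! h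
  obtain ⟨Q, hQ⟩ := exists_bound_of_forall_exists_isLocalPeriod hclosed fun ω hω => h ω hω 2
  have hu (n : ℕ) : ∃ q, 0 < q ∧ q ≤ Q ∧ IsLocalPeriod 2 (fun k : ℕ => x k) n q := by
    obtain ⟨q, hq, hqQ, hlp⟩ := hQ _ (translate_mem hinv hx n)
    refine ⟨q, hq, hqQ, fun a ha hab => ?_⟩
    have : x ((a - n : ℕ) + n) = x ((a - n + q : ℕ) + n) := hlp (a - n) (Nat.zero_le _) (by omega)
    rwa [show ((a - n : ℕ) : ℤ) + n = a by omega,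
      show ((a - n + q : ℕ) : ℤ) + n = ↑(a + q) by omega] at this
  obtain ⟨t, ht, N, hN⟩ := exists_eventually_periodic_of_isLocalPeriod_le le_rfl hu
  have hNℤ (i : ℤ) (hi : (N : ℤ) ≤ i) : x (i + t) = x i := by
    lift i to ℕ using by omega
    exact_mod_cast hN i (by omega)
  have hnot : ∃ j, x (j + t) ≠ x j := by
    by_contra! hper
    exact hxap t ht (funext fun i => by rw [shiftMap_iterate_apply, hper])
  obtain ⟨n₀, hper, hdef⟩ := exists_periodic_tail hNℤ hnot
  obtain ⟨q, hq, hlp⟩ := h _ (translate_mem hinv hx n₀) t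
  exact not_isLocalPeriod_of_periodic_succ (u := fun k : ℕ => x (k + n₀)) hper hdef hq hlp

end Subshift

theorem subshift_not_GRP_general {A : Type*} [Fintype A]
    [TopologicalSpace A] [DiscreteTopology A]
    (Ω : Set (ℤ → A)) (hclosed : IsClosed Ω)
    (hinv : shiftMap '' Ω = Ω)
    (hap : ∃ ω₀ ∈ Ω, ∀ p : ℕ, 0 < p → shiftMap^[p] ω₀ ≠ ω₀) :
    ∃ ω ∈ Ω, ∀ d : MetricSpace (ℤ → A),
      d.toUniformSpace.toTopologicalSpace = (inferInstance : TopologicalSpace (ℤ → A)) →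
      ¬ @RepetitionProperty (ℤ → A) d.toPseudoMetricSpace (fun k => shiftMap^[k] ω) := by
  obtain ⟨x, hx, hxap⟩ := hap
  obtain ⟨ω, hω, r, hr⟩ := exists_mem_forall_not_isLocalPeriod hclosed hinv hx hxap
  refine ⟨ω, hω, fun d hd => ?_⟩
  have hcompact : @CompactSpace _ d.toUniformSpace.toTopologicalSpace := hd ▸ inferInstance
  exact @not_repetitionProperty_of_forall_not_isLocalPeriod _ _ d.toPseudoMetricSpace hcompact
    _ _ (fun x => x 0) (hd ▸ continuous_apply 0) _ r
    (by simpa [shiftMap_iterate_apply] using hr)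

/-- A subshift over a finite alphabet containing a non-periodic point never satisfies
(GRP): some point of the subshift has a forward orbit without the repetition property
(with respect to any metric compatible with the product topology). -/
theorem subshift_not_GRP {A : Type*} [Fintype A] [Nontrivial A]
    [TopologicalSpace A] [DiscreteTopology A]
    (Ω : Set (ℤ → A)) (hne : Ω.Nonempty) (hclosed : IsClosed Ω)
    (hinv : shiftMap '' Ω = Ω)
    (hap : ∃ ω₀ ∈ Ω, ∀ p : ℕ, 0 < p → shiftMap^[p] ω₀ ≠ ω₀) :
    ∃ ω ∈ Ω, ∀ d : MetricSpace (ℤ → A),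
      d.toUniformSpace.toTopologicalSpace = (inferInstance : TopologicalSpace (ℤ → A)) →
      ¬ @RepetitionProperty (ℤ → A) d.toPseudoMetricSpace (fun k => shiftMap^[k] ω) :=
  subshift_not_GRP_general Ω hclosed hinv hap
end
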